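/- arXiv:1611.05718 — 4 statements merged into one kernel-verified Lean document; each statement's English description precedes it below -/
import Mathlib

section
/- Fix λ, μ ∈ ℂ and s ∈ {0, 1/2}, and suppose it is NOT the case that λ = 1 and 2(μ − s) ∈ ℤ. Then every skew-symmetric biderivation φ of the deformative Schrödinger–Virasoro Lie algebra 𝓛(λ,μ,s) is inner: there exists α ∈ ℂ with φ(x,y) = α[x,y] for all x, y ∈ 𝓛(λ,μ,s). -/
/-- A realization of the deformative Schrödinger–Virasoro Lie algebra `𝓛(λ, μ, s)`:
a Lie algebra `V` over `ℂ` with a basis `{E n, M n, Y n : n ∈ ℤ}` (where `E n`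
plays the role of `L_n`, `M n` of `M_n`, and `Y n` of `Y_{n+s}`, and `t ∈ ℤ`
satisfies `(t : ℂ) = 2 * s`), whose only nontrivial brackets of basis elements are
`[L_n, L_m] = (m - n) L_{n+m}`, `[L_n, M_m] = (m - λn + 2μ) M_{n+m}`,
`[L_n, Y_{m+s}] = (m + s - ((λ+1)/2) n + μ) Y_{n+m+s}` and
`[Y_{n+s}, Y_{m+s}] = (m - n) M_{n+m+2s}`. -/
structure DSV (lam mu s : ℂ) (t : ℤ) (V : Type*) [LieRing V] [LieAlgebra ℂ V] where
  E : ℤ → V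
  M : ℤ → V
  Y : ℤ → V
  ht : (t : ℂ) = 2 * s
  basis : Module.Basis (ℤ ⊕ ℤ ⊕ ℤ) ℂ V
  basis_inl : ∀ n : ℤ, basis (Sum.inl n) = E n
  basis_inr_inl : ∀ n : ℤ, basis (Sum.inr (Sum.inl n)) = M n
  basis_inr_inr : ∀ n : ℤ, basis (Sum.inr (Sum.inr n)) = Y n
  bracket_EE : ∀ n m : ℤ, ⁅E n, E m⁆ = ((m : ℂ) - n) • E (n + m)
  bracket_EM : ∀ n m : ℤ, ⁅E n, M m⁆ = ((m : ℂ) - lam * n + 2 * mu) • M (n + m)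
  bracket_EY : ∀ n m : ℤ,
    ⁅E n, Y m⁆ = ((m : ℂ) + s - ((lam + 1) / 2) * n + mu) • Y (n + m)
  bracket_YY : ∀ n m : ℤ, ⁅Y n, Y m⁆ = ((m : ℂ) - n) • M (n + m + t)
  bracket_MM : ∀ n m : ℤ, ⁅M n, M m⁆ = 0
  bracket_MY : ∀ n m : ℤ, ⁅M n, Y m⁆ = 0

namespace DSVAux


lemma int_ne_cast {a b : ℤ} (h : a ≠ b) : (a:ℂ) ≠ (b:ℂ) := by
  exact_mod_cast h

lemma pickc (w c : ℂ) (hw : w ≠ 0) :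
    ∃ n : ℤ, n ≠ 0 ∧ (n:ℂ) ≠ w ∧ c * (n:ℂ) ≠ w := by
  by_contra h
  push_neg at h
  by_cases h1 : (1:ℂ) = w
  · have e2 := h 2 (by norm_num) (by rw [← h1]; norm_num)
    have e3 := h 3 (by norm_num) (by rw [← h1]; norm_num)
    have hc : c = 0 := by push_cast at e2 e3; linear_combination e3 - e2
    rw [hc] at e2
    push_cast at e2
    exact hw (by linear_combination -e2)
  · by_cases h2 : (2:ℂ) = w
    · have e1 := h 1 (by norm_num) (by push_cast; exact fun he => h1 he)
      have e3 := h 3 (by norm_num) (by rw [← h2]; norm_num)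
      have hc : c = 0 := by push_cast at e1 e3; linear_combination (e3 - e1)/2
      rw [hc] at e1
      push_cast at e1
      exact hw (by linear_combination -e1)
    · have e1 := h 1 (by norm_num) (by push_cast; exact fun he => h1 he)
      have e2 := h 2 (by norm_num) (by push_cast; exact fun he => h2 he)
      have hc : c = 0 := by push_cast at e1 e2; linear_combination e2 - e1
      rw [hc] at e1
      push_cast at e1
      exact hw (by linear_combination -e1)

lemma pick_k (n : ℤ) (hn : n ≠ 0) (c : ℂ) :
    ∃ k : ℤ, k ≠ 0 ∧ k ≠ n ∧ (n:ℂ) - c * (k:ℂ) ≠ 0 := by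
  by_contra h
  push_neg at h
  by_cases h1 : (1:ℤ) = n
  · have e2 := h 2 (by norm_num) (by omega)
    have e3 := h 3 (by norm_num) (by omega)
    have hc : c = 0 := by push_cast at e2 e3; linear_combination e2 - e3
    have e2' := e2
    rw [hc] at e2'
    push_cast at e2'
    have : (n:ℂ) = 0 := by linear_combination e2'
    exact hn (by exact_mod_cast this)
  · by_cases h2 : (2:ℤ) = n
    · have e1 := h 1 (by norm_num) (by omega)
      have e3 := h 3 (by norm_num) (by omega)
      have hc : c = 0 := by push_cast at e1 e3; linear_combination (e1 - e3)/2
      rw [hc] at e1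
      push_cast at e1
      have : (n:ℂ) = 0 := by linear_combination e1
      exact hn (by exact_mod_cast this)
    · have e1 := h 1 (by norm_num) (by omega)
      have e2 := h 2 (by norm_num) (by omega)
      have hc : c = 0 := by push_cast at e1 e2; linear_combination e1 - e2
      rw [hc] at e1
      push_cast at e1
      have : (n:ℂ) = 0 := by linear_combination e1
      exact hn (by exact_mod_cast this)

lemma kill (K : ℂ) (hK : K ≠ 1) (f : ℤ → ℂ) (h0 : f 0 = 0)
    (hC : ∀ n m : ℤ, n ≠ m →
      (m:ℂ) * ((n:ℂ) - K*(m:ℂ)) * f n + (n:ℂ) * ((m:ℂ) - K*(n:ℂ)) * f m = 0)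
    (hD : ∀ n m : ℤ, ((m:ℂ) - (n:ℂ)) * f (n+m)
      = -(((n:ℂ) - K*(m:ℂ)) * f n) + ((m:ℂ) - K*(n:ℂ)) * f m) :
    ∀ n : ℤ, f n = 0 := by
  have hK' : K - 1 ≠ 0 := sub_ne_zero.mpr hK
  have e1 := hC 1 2 (by norm_num)
  have e2 := hD 1 2
  have e3 := hC 1 3 (by norm_num)
  have e4 := hC 2 3 (by norm_num)
  push_cast at e1 e2 e3 e4
  norm_num at e2
  -- f 1 = 0
  have hf1 : f 1 = 0 := by
    have h : f 1 * ((K-1)*(K-1)) = 0 := by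
      linear_combination (-(1:ℂ)/6) * e3 + ((3-K)/6) * e2 + ((3-K)/6) * e1
    rcases mul_eq_zero.mp h with h | h
    · exact h
    · exact absurd (mul_self_eq_zero.mp h) hK'
  -- f 2 = 0
  have hf2 : f 2 = 0 := by
    have h : (2 - K) * f 2 = 0 := by linear_combination e1 - (2*(1 - K*2))*hf1
    have hf3e : f 3 = (2-K) * f 2 := by linear_combination e2 + (K*2 - 1)*hf1
    have h4 : (2 - 3*K) * f 2 = 0 := by
      linear_combination (1/3 : ℂ)*e4 - (2*(3-2*K)/3)*hf3e - (2*(3-2*K)/3)*h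
    by_cases hf : f 2 = 0
    · exact hf
    exfalso
    have hK2 : (2:ℂ) - K = 0 := by
      rcases mul_eq_zero.mp h with h | h
      · exact h
      · exact absurd h hf
    have hK3 : (2:ℂ) - 3*K = 0 := by
      rcases mul_eq_zero.mp h4 with h | h
      · exact h
      · exact absurd h hf
    have hK0 : K = 0 := by linear_combination (hK2 - hK3)/2
    rw [hK0] at hK2
    norm_num at hK2
  have hf3 : f 3 = 0 := by
    have := e2
    rw [hf1, hf2] at this
    linear_combination this
  intro n
  by_cases h0' : n = 0; · rw [h0']; exact h0
  by_cases h1' : n = 1; · rw [h1']; exact hf1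
  by_cases h2' : n = 2; · rw [h2']; exact hf2
  by_cases h3' : n = 3; · rw [h3']; exact hf3
  by_cases hfn : f n = 0
  · exact hfn
  exfalso
  have g1 := hC n 1 h1'
  have g2 := hC n 2 h2'
  push_cast at g1 g2
  rw [hf1] at g1
  rw [hf2] at g2
  have g1' : ((n:ℂ) - K) * f n = 0 := by linear_combination g1
  have g2' : (2:ℂ) * ((n:ℂ) - K*2) * f n = 0 := by linear_combination g2
  have hA : (n:ℂ) = K := by
    rcases mul_eq_zero.mp g1' with h | h
    · linear_combination h
    · exact absurd h hfn
  have hB : (n:ℂ) = 2*K := by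
    rcases mul_eq_zero.mp g2' with h | h
    · rcases mul_eq_zero.mp h with h | h
      · norm_num at h
      · linear_combination h
    · exact absurd h hfn
  have hKK : K = 0 := by linear_combination hA - hB
  rw [hKK] at hA
  norm_num at hA
  exact h0' (by exact_mod_cast hA)


structure BD (lam mu s : ℂ) (t : ℤ) (V : Type*) [LieRing V] [LieAlgebra ℂ V]
    extends DSV lam mu s t V where
  φ : V →ₗ[ℂ] V →ₗ[ℂ] V
  hskew : ∀ x y : V, φ x y = - φ y x
  hbd₁ : ∀ x y z : V, φ ⁅x, y⁆ z = ⁅x, φ y z⁆ + ⁅φ x z, y⁆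
  hbd₂ : ∀ x y z : V, φ x ⁅y, z⁆ = ⁅φ x y, z⁆ + ⁅y, φ x z⁆

namespace BD

variable {lam mu s : ℂ} {t : ℤ} {V : Type*} [LieRing V] [LieAlgebra ℂ V]
variable (B : BD lam mu s t V)

noncomputable def cE (v : V) (j : ℤ) : ℂ := B.basis.repr v (Sum.inl j)
noncomputable def cM (v : V) (j : ℤ) : ℂ := B.basis.repr v (Sum.inr (Sum.inl j))
noncomputable def cY (v : V) (j : ℤ) : ℂ := B.basis.repr v (Sum.inr (Sum.inr j))

@[simp] lemma cE_add (v w : V) (j : ℤ) : B.cE (v + w) j = B.cE v j + B.cE w j := by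
  simp [cE]
@[simp] lemma cM_add (v w : V) (j : ℤ) : B.cM (v + w) j = B.cM v j + B.cM w j := by
  simp [cM]
@[simp] lemma cY_add (v w : V) (j : ℤ) : B.cY (v + w) j = B.cY v j + B.cY w j := by
  simp [cY]
@[simp] lemma cE_smul (c : ℂ) (v : V) (j : ℤ) : B.cE (c • v) j = c * B.cE v j := by
  simp [cE]
@[simp] lemma cM_smul (c : ℂ) (v : V) (j : ℤ) : B.cM (c • v) j = c * B.cM v j := by
  simp [cM]
@[simp] lemma cY_smul (c : ℂ) (v : V) (j : ℤ) : B.cY (c • v) j = c * B.cY v j := by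
  simp [cY]
@[simp] lemma cE_neg (v : V) (j : ℤ) : B.cE (-v) j = - B.cE v j := by simp [cE]
@[simp] lemma cM_neg (v : V) (j : ℤ) : B.cM (-v) j = - B.cM v j := by simp [cM]
@[simp] lemma cY_neg (v : V) (j : ℤ) : B.cY (-v) j = - B.cY v j := by simp [cY]
@[simp] lemma cE_zero (j : ℤ) : B.cE 0 j = 0 := by simp [cE]
@[simp] lemma cM_zero (j : ℤ) : B.cM 0 j = 0 := by simp [cM]
@[simp] lemma cY_zero (j : ℤ) : B.cY 0 j = 0 := by simp [cY]

lemma cE_lieE (m : ℤ) (v : V) (j : ℤ) :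
    B.cE ⁅B.E m, v⁆ j = ((j : ℂ) - 2*m) * B.cE v (j - m) := by
  have h : (Finsupp.lapply (Sum.inl j : ℤ ⊕ (ℤ ⊕ ℤ))).comp
        ((B.basis.repr.toLinearMap).comp ((LieAlgebra.ad ℂ V (B.E m) : V →ₗ[ℂ] V)))
      = ((j : ℂ) - 2*m) • ((Finsupp.lapply (Sum.inl (j - m))).comp B.basis.repr.toLinearMap) := by
    apply B.basis.ext
    intro i
    simp only [LinearMap.comp_apply, LieAlgebra.ad_apply, LinearMap.smul_apply,
      Finsupp.lapply_apply, LinearEquiv.coe_toLinearMap, smul_eq_mul]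
    obtain k | k | k := i
    · rw [B.basis_inl k, B.bracket_EE, ← B.basis_inl (m + k), ← B.basis_inl k,
        map_smul]
      simp only [Module.Basis.repr_self, Finsupp.smul_apply, Finsupp.single_apply, smul_eq_mul]
      rcases eq_or_ne k (j - m) with hk | hk
      · subst hk
        rw [if_pos (by rw [show m + (j-m) = j by omega] : Sum.inl (m + (j-m)) = (Sum.inl j : ℤ ⊕ (ℤ ⊕ ℤ)))]
        rw [if_pos rfl]
        push_cast; ring
      · rw [if_neg (by simp only [Sum.inl.injEq]; omega), if_neg (by simpa using hk)]
        ring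
    · rw [B.basis_inr_inl k, B.bracket_EM, ← B.basis_inr_inl (m + k), ← B.basis_inr_inl k,
        map_smul]
      simp [Finsupp.single_apply]
    · rw [B.basis_inr_inr k, B.bracket_EY, ← B.basis_inr_inr (m + k), ← B.basis_inr_inr k,
        map_smul]
      simp [Finsupp.single_apply]
  have h2 := LinearMap.congr_fun h v
  simpa [cE, LieAlgebra.ad_apply] using h2


lemma cM_lieE (m : ℤ) (v : V) (j : ℤ) :
    B.cM ⁅B.E m, v⁆ j = ((j : ℂ) - m - lam*m + 2*mu) * B.cM v (j - m) := by
  have h : (Finsupp.lapply (Sum.inr (Sum.inl j) : ℤ ⊕ (ℤ ⊕ ℤ))).comp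
        ((B.basis.repr.toLinearMap).comp ((LieAlgebra.ad ℂ V (B.E m) : V →ₗ[ℂ] V)))
      = ((j : ℂ) - m - lam*m + 2*mu) • ((Finsupp.lapply (Sum.inr (Sum.inl (j - m)))).comp B.basis.repr.toLinearMap) := by
    apply B.basis.ext
    intro i
    simp only [LinearMap.comp_apply, LieAlgebra.ad_apply, LinearMap.smul_apply,
      Finsupp.lapply_apply, LinearEquiv.coe_toLinearMap, smul_eq_mul]
    obtain k | k | k := i
    · rw [B.basis_inl k, B.bracket_EE, ← B.basis_inl (m + k), ← B.basis_inl k,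
        map_smul]
      simp [Finsupp.single_apply]
    · rw [B.basis_inr_inl k, B.bracket_EM, ← B.basis_inr_inl (m + k), ← B.basis_inr_inl k,
        map_smul]
      simp only [Module.Basis.repr_self, Finsupp.smul_apply, Finsupp.single_apply, smul_eq_mul]
      rcases eq_or_ne k (j - m) with hk | hk
      · subst hk
        rw [if_pos (by rw [show m + (j-m) = j by omega] :
              (Sum.inr (Sum.inl (m + (j-m))) : ℤ ⊕ (ℤ ⊕ ℤ)) = Sum.inr (Sum.inl j)),
          if_pos rfl]
        push_cast; ring
      · rw [if_neg (by simp only [Sum.inr.injEq, Sum.inl.injEq]; omega),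
          if_neg (by simpa using hk)]
        ring
    · rw [B.basis_inr_inr k, B.bracket_EY, ← B.basis_inr_inr (m + k), ← B.basis_inr_inr k,
        map_smul]
      simp [Finsupp.single_apply]
  have h2 := LinearMap.congr_fun h v
  simpa [cM, LieAlgebra.ad_apply] using h2

lemma cY_lieE (m : ℤ) (v : V) (j : ℤ) :
    B.cY ⁅B.E m, v⁆ j = ((j : ℂ) - m + s - ((lam+1)/2)*m + mu) * B.cY v (j - m) := by
  have h : (Finsupp.lapply (Sum.inr (Sum.inr j) : ℤ ⊕ (ℤ ⊕ ℤ))).comp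
        ((B.basis.repr.toLinearMap).comp ((LieAlgebra.ad ℂ V (B.E m) : V →ₗ[ℂ] V)))
      = ((j : ℂ) - m + s - ((lam+1)/2)*m + mu) • ((Finsupp.lapply (Sum.inr (Sum.inr (j - m)))).comp B.basis.repr.toLinearMap) := by
    apply B.basis.ext
    intro i
    simp only [LinearMap.comp_apply, LieAlgebra.ad_apply, LinearMap.smul_apply,
      Finsupp.lapply_apply, LinearEquiv.coe_toLinearMap, smul_eq_mul]
    obtain k | k | k := i
    · rw [B.basis_inl k, B.bracket_EE, ← B.basis_inl (m + k), ← B.basis_inl k,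
        map_smul]
      simp [Finsupp.single_apply]
    · rw [B.basis_inr_inl k, B.bracket_EM, ← B.basis_inr_inl (m + k), ← B.basis_inr_inl k,
        map_smul]
      simp [Finsupp.single_apply]
    · rw [B.basis_inr_inr k, B.bracket_EY, ← B.basis_inr_inr (m + k), ← B.basis_inr_inr k,
        map_smul]
      simp only [Module.Basis.repr_self, Finsupp.smul_apply, Finsupp.single_apply, smul_eq_mul]
      rcases eq_or_ne k (j - m) with hk | hk
      · subst hk
        rw [if_pos (by rw [show m + (j-m) = j by omega] :
              (Sum.inr (Sum.inr (m + (j-m))) : ℤ ⊕ (ℤ ⊕ ℤ)) = Sum.inr (Sum.inr j)),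
          if_pos rfl]
        push_cast; ring
      · rw [if_neg (by simp only [Sum.inr.injEq]; omega),
          if_neg (by simpa using hk)]
        ring
  have h2 := LinearMap.congr_fun h v
  simpa [cY, LieAlgebra.ad_apply] using h2

lemma cM_lieY (m : ℤ) (v : V) (j : ℤ) :
    B.cM ⁅B.Y m, v⁆ j = ((j : ℂ) - 2*m - t) * B.cY v (j - m - t) := by
  have h : (Finsupp.lapply (Sum.inr (Sum.inl j) : ℤ ⊕ (ℤ ⊕ ℤ))).comp
        ((B.basis.repr.toLinearMap).comp ((LieAlgebra.ad ℂ V (B.Y m) : V →ₗ[ℂ] V)))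
      = ((j : ℂ) - 2*m - t) • ((Finsupp.lapply (Sum.inr (Sum.inr (j - m - t)))).comp B.basis.repr.toLinearMap) := by
    apply B.basis.ext
    intro i
    simp only [LinearMap.comp_apply, LieAlgebra.ad_apply, LinearMap.smul_apply,
      Finsupp.lapply_apply, LinearEquiv.coe_toLinearMap, smul_eq_mul]
    obtain k | k | k := i
    · rw [B.basis_inl k, ← lie_skew, B.bracket_EY, ← B.basis_inr_inr (k + m),
        ← B.basis_inl k, map_neg, map_smul]
      simp [Finsupp.single_apply]
    · rw [B.basis_inr_inl k, ← lie_skew, B.bracket_MY, neg_zero, ← B.basis_inr_inl k]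
      simp
    · rw [B.basis_inr_inr k, B.bracket_YY, ← B.basis_inr_inl (m + k + t),
        ← B.basis_inr_inr k, map_smul]
      simp only [Module.Basis.repr_self, Finsupp.smul_apply, Finsupp.single_apply, smul_eq_mul]
      rcases eq_or_ne k (j - m - t) with hk | hk
      · subst hk
        rw [if_pos (by rw [show m + (j-m-t) + t = j by omega] :
              (Sum.inr (Sum.inl (m + (j-m-t) + t)) : ℤ ⊕ (ℤ ⊕ ℤ)) = Sum.inr (Sum.inl j)),
          if_pos rfl]
        push_cast; ring
      · rw [if_neg (by simp only [Sum.inr.injEq, Sum.inl.injEq]; omega),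
          if_neg (by simpa using hk)]
        ring
  have h2 := LinearMap.congr_fun h v
  simpa [cM, cY, LieAlgebra.ad_apply] using h2

lemma cE_lieE' (m : ℤ) (v : V) (j : ℤ) :
    B.cE ⁅v, B.E m⁆ j = -(((j : ℂ) - 2*m) * B.cE v (j - m)) := by
  rw [← lie_skew, cE_neg, cE_lieE]

lemma cM_lieE' (m : ℤ) (v : V) (j : ℤ) :
    B.cM ⁅v, B.E m⁆ j = -(((j : ℂ) - m - lam*m + 2*mu) * B.cM v (j - m)) := by
  rw [← lie_skew, cM_neg, cM_lieE]

lemma cY_lieE' (m : ℤ) (v : V) (j : ℤ) :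
    B.cY ⁅v, B.E m⁆ j = -(((j : ℂ) - m + s - ((lam+1)/2)*m + mu) * B.cY v (j - m)) := by
  rw [← lie_skew, cY_neg, cY_lieE]

lemma cM_lieY' (m : ℤ) (v : V) (j : ℤ) :
    B.cM ⁅v, B.Y m⁆ j = -(((j : ℂ) - 2*m - t) * B.cY v (j - m - t)) := by
  rw [← lie_skew, cM_neg, cM_lieY]

/-! basic eigen and φ facts -/

lemma lieE0_E (n : ℤ) : ⁅B.E 0, B.E n⁆ = (n : ℂ) • B.E n := by
  have h := B.bracket_EE 0 n
  simpa using h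

lemma lieE0_M (n : ℤ) : ⁅B.E 0, B.M n⁆ = ((n : ℂ) + 2*mu) • B.M n := by
  have h := B.bracket_EM 0 n
  simpa using h

lemma lieE0_Y (n : ℤ) : ⁅B.E 0, B.Y n⁆ = ((n : ℂ) + s + mu) • B.Y n := by
  have h := B.bracket_EY 0 n
  rw [zero_add] at h
  rw [h]
  ring_nf

lemma phi_self (x : V) : B.φ x x = 0 := by
  have h := B.hskew x x
  have h2 : (2:ℂ) • B.φ x x = 0 := by
    rw [two_smul]
    nth_rewrite 1 [h]
    abel
  rcases smul_eq_zero.mp h2 with h3 | h3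
  · norm_num at h3
  · exact h3

lemma lie_eig {u w : V} {a b : ℂ} (hu : ⁅B.E 0, u⁆ = a • u) (hw : ⁅B.E 0, w⁆ = b • w) :
    ⁅B.E 0, ⁅u, w⁆⁆ = (a + b) • ⁅u, w⁆ := by
  rw [leibniz_lie, hu, hw, smul_lie, lie_smul, add_smul]

lemma D_eig {y : V} {d : ℂ} (hy : ⁅B.E 0, y⁆ = d • y) :
    ⁅B.E 0, B.φ (B.E 0) y⁆ = d • B.φ (B.E 0) y := by
  have h := B.hbd₂ (B.E 0) (B.E 0) y
  rw [B.phi_self (B.E 0), zero_lie, zero_add, hy, map_smul] at h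
  exact h.symm

lemma W2 (x y : V) (c d : ℂ) (hx : ⁅B.E 0, x⁆ = c • x) (hy : ⁅B.E 0, y⁆ = d • y)
    (hcd : c ≠ d) :
    ⁅B.φ (B.E 0) x, y⁆ = c • B.φ x y ∧ ⁅B.φ (B.E 0) y, x⁆ = -(d • B.φ x y) := by
  set p := B.φ x y with hp
  have hI : c • p = ⁅B.E 0, p⁆ + ⁅B.φ (B.E 0) y, x⁆ := by
    have h := B.hbd₁ (B.E 0) x y
    rw [hx, map_smul] at h
    simpa [hp] using h
  have hII : d • p = ⁅B.E 0, p⁆ - ⁅B.φ (B.E 0) x, y⁆ := by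
    have h := B.hbd₂ x (B.E 0) y
    rw [hy, map_smul, B.hskew x (B.E 0), neg_lie] at h
    rw [hp]
    rw [h]; abel
  have hq : (c - d) • p = ⁅B.φ (B.E 0) y, x⁆ + ⁅B.φ (B.E 0) x, y⁆ := by
    rw [sub_smul, hI, hII]; abel
  have hDx := B.D_eig hx
  have hDy := B.D_eig hy
  have hqe : ⁅B.E 0, ⁅B.φ (B.E 0) y, x⁆ + ⁅B.φ (B.E 0) x, y⁆⁆
      = (c + d) • (⁅B.φ (B.E 0) y, x⁆ + ⁅B.φ (B.E 0) x, y⁆) := by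
    rw [lie_add, B.lie_eig hDy hx, B.lie_eig hDx hy, smul_add]
    rw [show d + c = c + d by ring]
  have hkey : (c - d) • ⁅B.φ (B.E 0) y, x⁆ = ((c-d) * (-d)) • p := by
    have h1 : ⁅B.E 0, (c-d) • p⁆ = ((c+d)*(c-d)) • p := by
      rw [hq, hqe, ← hq, smul_smul]
    have h2 : ⁅B.E 0, p⁆ = c • p - ⁅B.φ (B.E 0) y, x⁆ := by
      rw [eq_sub_iff_add_eq, ← hI]
    have h4 : (c-d) • ⁅B.E 0, p⁆ = ((c+d)*(c-d)) • p := by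
      rw [← lie_smul, h1]
    rw [h2, smul_sub, smul_smul] at h4
    have h3 : (c-d) • ⁅B.φ (B.E 0) y, x⁆ = ((c-d)*c) • p - ((c+d)*(c-d)) • p := by
      rw [← h4]; abel
    rw [h3, ← sub_smul]
    congr 1
    ring
  have hcd' : c - d ≠ 0 := sub_ne_zero.mpr hcd
  have hW2b : ⁅B.φ (B.E 0) y, x⁆ = -(d • p) := by
    have := smul_right_injective V hcd' (by rw [hkey, smul_smul] : (c-d) • ⁅B.φ (B.E 0) y, x⁆ = (c-d) • ((-d) • p))
    rw [this, neg_smul]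
  constructor
  · have : ⁅B.φ (B.E 0) x, y⁆ = (c - d) • p - ⁅B.φ (B.E 0) y, x⁆ := by
      rw [hq]; abel
    rw [this, hW2b, sub_smul]
    abel
  · exact hW2b

lemma C1 (x y : V) (c d : ℂ) (hx : ⁅B.E 0, x⁆ = c • x) (hy : ⁅B.E 0, y⁆ = d • y)
    (hcd : c ≠ d) :
    d • ⁅B.φ (B.E 0) x, y⁆ + c • ⁅B.φ (B.E 0) y, x⁆ = 0 := by
  obtain ⟨h1, h2⟩ := B.W2 x y c d hx hy hcd
  rw [h1, h2, smul_smul, smul_neg, smul_smul, mul_comm]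
  abel

/-! support lemmas -/

lemma suppE {v : V} {c : ℂ} (hv : ⁅B.E 0, v⁆ = c • v) {j : ℤ} (hj : (j:ℂ) ≠ c) :
    B.cE v j = 0 := by
  have h1 := B.cE_lieE 0 v j
  rw [hv, cE_smul] at h1
  simp only [Int.cast_zero, mul_zero, sub_zero] at h1
  have : ((j:ℂ) - c) * B.cE v j = 0 := by linear_combination -h1
  rcases mul_eq_zero.mp this with h | h
  · exact absurd (by linear_combination h) hj
  · exact h

lemma suppM {v : V} {c : ℂ} (hv : ⁅B.E 0, v⁆ = c • v) {j : ℤ} (hj : (j:ℂ) + 2*mu ≠ c) :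
    B.cM v j = 0 := by
  have h1 := B.cM_lieE 0 v j
  rw [hv, cM_smul] at h1
  simp only [Int.cast_zero, mul_zero, sub_zero] at h1
  have : ((j:ℂ) + 2*mu - c) * B.cM v j = 0 := by linear_combination -h1
  rcases mul_eq_zero.mp this with h | h
  · exact absurd (by linear_combination h) hj
  · exact h

lemma suppY {v : V} {c : ℂ} (hv : ⁅B.E 0, v⁆ = c • v) {j : ℤ} (hj : (j:ℂ) + s + mu ≠ c) :
    B.cY v j = 0 := by
  have h1 := B.cY_lieE 0 v j
  rw [hv, cY_smul] at h1
  simp only [Int.cast_zero, mul_zero, sub_zero] at h1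
  have : ((j:ℂ) + s + mu - c) * B.cY v j = 0 := by linear_combination -h1
  rcases mul_eq_zero.mp this with h | h
  · exact absurd (by linear_combination h) hj
  · exact h



/-! coefficients of basis vectors -/

@[simp] lemma cE_E (k j : ℤ) : B.cE (B.E k) j = if k = j then 1 else 0 := by
  rw [cE, ← B.basis_inl k, Module.Basis.repr_self]
  simp [Finsupp.single_apply]

@[simp] lemma cM_E (k j : ℤ) : B.cM (B.E k) j = 0 := by
  rw [cM, ← B.basis_inl k, Module.Basis.repr_self]
  simp [Finsupp.single_apply]

@[simp] lemma cY_E (k j : ℤ) : B.cY (B.E k) j = 0 := by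
  rw [cY, ← B.basis_inl k, Module.Basis.repr_self]
  simp [Finsupp.single_apply]

@[simp] lemma cE_M (k j : ℤ) : B.cE (B.M k) j = 0 := by
  rw [cE, ← B.basis_inr_inl k, Module.Basis.repr_self]
  simp [Finsupp.single_apply]

@[simp] lemma cM_M (k j : ℤ) : B.cM (B.M k) j = if k = j then 1 else 0 := by
  rw [cM, ← B.basis_inr_inl k, Module.Basis.repr_self]
  simp [Finsupp.single_apply]

@[simp] lemma cY_M (k j : ℤ) : B.cY (B.M k) j = 0 := by
  rw [cY, ← B.basis_inr_inl k, Module.Basis.repr_self]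
  simp [Finsupp.single_apply]

@[simp] lemma cE_Y (k j : ℤ) : B.cE (B.Y k) j = 0 := by
  rw [cE, ← B.basis_inr_inr k, Module.Basis.repr_self]
  simp [Finsupp.single_apply]

@[simp] lemma cM_Y (k j : ℤ) : B.cM (B.Y k) j = 0 := by
  rw [cM, ← B.basis_inr_inr k, Module.Basis.repr_self]
  simp [Finsupp.single_apply]

@[simp] lemma cY_Y (k j : ℤ) : B.cY (B.Y k) j = if k = j then 1 else 0 := by
  rw [cY, ← B.basis_inr_inr k, Module.Basis.repr_self]
  simp [Finsupp.single_apply]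

/-- the scalar that will realize the biderivation as inner -/
noncomputable def alpha : ℂ := B.cE (B.φ (B.E 0) (B.E 1)) 1

lemma DE (hco : ¬ (lam = 1 ∧ ∃ r : ℤ, (r : ℂ) = 2 * (mu - s))) :
    ∀ n : ℤ, B.φ (B.E 0) (B.E n) = (B.alpha * (n:ℂ)) • B.E n := by
  have hD0 : B.φ (B.E 0) (B.E 0) = 0 := B.phi_self (B.E 0)
  have heig : ∀ n : ℤ, ⁅B.E 0, B.φ (B.E 0) (B.E n)⁆ = (n:ℂ) • B.φ (B.E 0) (B.E n) :=
    fun n => B.D_eig (B.lieE0_E n)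
  have hC1 : ∀ n m : ℤ, n ≠ m →
      (m:ℂ) • ⁅B.φ (B.E 0) (B.E n), B.E m⁆ + (n:ℂ) • ⁅B.φ (B.E 0) (B.E m), B.E n⁆ = 0 :=
    fun n m h => B.C1 (B.E n) (B.E m) n m (B.lieE0_E n) (B.lieE0_E m) (int_ne_cast h)
  have hDer : ∀ n m : ℤ, ((m:ℂ) - (n:ℂ)) • B.φ (B.E 0) (B.E (n+m))
      = ⁅B.φ (B.E 0) (B.E n), B.E m⁆ + ⁅B.E n, B.φ (B.E 0) (B.E m)⁆ := by
    intro n m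
    have h := B.hbd₂ (B.E 0) (B.E n) (B.E m)
    rw [B.bracket_EE n m, map_smul] at h
    exact h
  -- the diagonal E coefficients
  have hA : ∀ n : ℤ, B.cE (B.φ (B.E 0) (B.E n)) n = B.alpha * (n:ℂ) := by
    have hprop : ∀ n m : ℤ, n ≠ m → (m:ℂ) * B.cE (B.φ (B.E 0) (B.E n)) n
        = (n:ℂ) * B.cE (B.φ (B.E 0) (B.E m)) m := by
      intro n m h
      have h1 := congrArg (fun v => B.cE v (n+m)) (hC1 n m h)
      simp only [cE_add, cE_smul, cE_zero] at h1
      rw [B.cE_lieE' m _ (n+m), B.cE_lieE' n _ (n+m)] at h1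
      rw [show n+m-m = n by omega, show n+m-n = m by omega] at h1
      push_cast at h1
      have h2 : ((n:ℂ) - (m:ℂ)) * ((n:ℂ) * B.cE (B.φ (B.E 0) (B.E m)) m
          - (m:ℂ) * B.cE (B.φ (B.E 0) (B.E n)) n) = 0 := by linear_combination h1
      rcases mul_eq_zero.mp h2 with h3 | h3
      · exact absurd (by linear_combination h3) (int_ne_cast h)
      · linear_combination -h3
    intro n
    by_cases hn : n = 1
    · rw [hn]
      push_cast
      rw [mul_one]
      rfl
    · have h := hprop n 1 hn
      push_cast at h
      have halpha : B.cE (B.φ (B.E 0) (B.E 1)) 1 = B.alpha := rfl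
      rw [halpha, one_mul] at h
      linear_combination h
  -- the M coefficients all vanish
  have hM0 : ∀ n j : ℤ, B.cM (B.φ (B.E 0) (B.E n)) j = 0 := by
    by_cases hp : ∃ p : ℤ, (p:ℂ) = 2*mu
    · obtain ⟨p, hp⟩ := hp
      have hlam1 : lam ≠ 1 := by
        intro hl
        exact hco ⟨hl, ⟨p - t, by push_cast; linear_combination hp - B.ht⟩⟩
      have hsupp : ∀ n j : ℤ, j ≠ n - p → B.cM (B.φ (B.E 0) (B.E n)) j = 0 := by
        intro n j hj
        refine B.suppM (heig n) ?_
        intro hcon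
        apply hj
        have : (j:ℂ) = ((n - p : ℤ):ℂ) := by push_cast; linear_combination hcon + hp
        exact_mod_cast this
      have hCf : ∀ n m : ℤ, n ≠ m →
          (m:ℂ) * ((n:ℂ) - lam*(m:ℂ)) * B.cM (B.φ (B.E 0) (B.E n)) (n-p)
          + (n:ℂ) * ((m:ℂ) - lam*(n:ℂ)) * B.cM (B.φ (B.E 0) (B.E m)) (m-p) = 0 := by
        intro n m h
        have h1 := congrArg (fun v => B.cM v (n+m-p)) (hC1 n m h)
        simp only [cM_add, cM_smul, cM_zero] at h1
        rw [B.cM_lieE' m _ (n+m-p), B.cM_lieE' n _ (n+m-p)] at h1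
        rw [show n+m-p-m = n-p by omega, show n+m-p-n = m-p by omega] at h1
        push_cast at h1
        linear_combination -h1 + ((m:ℂ) * B.cM (B.φ (B.E 0) (B.E n)) (n-p)
          + (n:ℂ) * B.cM (B.φ (B.E 0) (B.E m)) (m-p)) * hp
      have hDf : ∀ n m : ℤ, ((m:ℂ) - (n:ℂ)) * B.cM (B.φ (B.E 0) (B.E (n+m))) (n+m-p)
          = -(((n:ℂ) - lam*(m:ℂ)) * B.cM (B.φ (B.E 0) (B.E n)) (n-p))
          + ((m:ℂ) - lam*(n:ℂ)) * B.cM (B.φ (B.E 0) (B.E m)) (m-p) := by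
        intro n m
        have h1 := congrArg (fun v => B.cM v (n+m-p)) (hDer n m)
        simp only [cM_add, cM_smul] at h1
        rw [B.cM_lieE' m _ (n+m-p), B.cM_lieE n _ (n+m-p)] at h1
        rw [show n+m-p-m = n-p by omega, show n+m-p-n = m-p by omega] at h1
        push_cast at h1
        linear_combination h1 + ((B.cM (B.φ (B.E 0) (B.E n)) (n-p))
          - (B.cM (B.φ (B.E 0) (B.E m)) (m-p))) * hp
      have h0' : B.cM (B.φ (B.E 0) (B.E 0)) (0 - p) = 0 := by rw [hD0]; simp
      have hkill := kill lam hlam1 (fun n => B.cM (B.φ (B.E 0) (B.E n)) (n - p)) h0' hCf hDf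
      intro n j
      by_cases hj : j = n - p
      · rw [hj]; exact hkill n
      · exact hsupp n j hj
    · intro n j
      refine B.suppM (heig n) ?_
      intro hcon
      exact hp ⟨n - j, by push_cast; linear_combination -hcon⟩
  -- the Y coefficients all vanish
  have hY0 : ∀ n j : ℤ, B.cY (B.φ (B.E 0) (B.E n)) j = 0 := by
    by_cases hq : ∃ q : ℤ, (q:ℂ) = s + mu
    · obtain ⟨q, hq⟩ := hq
      have hlam1 : lam ≠ 1 := by
        intro hl
        exact hco ⟨hl, ⟨2*q - 2*t, by push_cast; linear_combination 2*hq - 2*B.ht⟩⟩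
      have hK1 : (lam+1)/2 ≠ 1 := by
        intro h
        exact hlam1 (by linear_combination 2*h)
      have hsupp : ∀ n j : ℤ, j ≠ n - q → B.cY (B.φ (B.E 0) (B.E n)) j = 0 := by
        intro n j hj
        refine B.suppY (heig n) ?_
        intro hcon
        apply hj
        have : (j:ℂ) = ((n - q : ℤ):ℂ) := by push_cast; linear_combination hcon + hq
        exact_mod_cast this
      have hCf : ∀ n m : ℤ, n ≠ m →
          (m:ℂ) * ((n:ℂ) - (lam+1)/2*(m:ℂ)) * B.cY (B.φ (B.E 0) (B.E n)) (n-q)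
          + (n:ℂ) * ((m:ℂ) - (lam+1)/2*(n:ℂ)) * B.cY (B.φ (B.E 0) (B.E m)) (m-q) = 0 := by
        intro n m h
        have h1 := congrArg (fun v => B.cY v (n+m-q)) (hC1 n m h)
        simp only [cY_add, cY_smul, cY_zero] at h1
        rw [B.cY_lieE' m _ (n+m-q), B.cY_lieE' n _ (n+m-q)] at h1
        rw [show n+m-q-m = n-q by omega, show n+m-q-n = m-q by omega] at h1
        push_cast at h1
        linear_combination -h1 + ((m:ℂ) * B.cY (B.φ (B.E 0) (B.E n)) (n-q)
          + (n:ℂ) * B.cY (B.φ (B.E 0) (B.E m)) (m-q)) * hq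
      have hDf : ∀ n m : ℤ, ((m:ℂ) - (n:ℂ)) * B.cY (B.φ (B.E 0) (B.E (n+m))) (n+m-q)
          = -(((n:ℂ) - (lam+1)/2*(m:ℂ)) * B.cY (B.φ (B.E 0) (B.E n)) (n-q))
          + ((m:ℂ) - (lam+1)/2*(n:ℂ)) * B.cY (B.φ (B.E 0) (B.E m)) (m-q) := by
        intro n m
        have h1 := congrArg (fun v => B.cY v (n+m-q)) (hDer n m)
        simp only [cY_add, cY_smul] at h1
        rw [B.cY_lieE' m _ (n+m-q), B.cY_lieE n _ (n+m-q)] at h1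
        rw [show n+m-q-m = n-q by omega, show n+m-q-n = m-q by omega] at h1
        push_cast at h1
        linear_combination h1 + ((B.cY (B.φ (B.E 0) (B.E n)) (n-q))
          - (B.cY (B.φ (B.E 0) (B.E m)) (m-q))) * hq
      have h0' : B.cY (B.φ (B.E 0) (B.E 0)) (0 - q) = 0 := by rw [hD0]; simp
      have hkill := kill ((lam+1)/2) hK1 (fun n => B.cY (B.φ (B.E 0) (B.E n)) (n - q)) h0' hCf hDf
      intro n j
      by_cases hj : j = n - q
      · rw [hj]; exact hkill n
      · exact hsupp n j hj
    · intro n j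
      refine B.suppY (heig n) ?_
      intro hcon
      exact hq ⟨n - j, by push_cast; linear_combination -hcon⟩
  -- assemble
  intro n
  refine B.basis.repr.injective (Finsupp.ext fun i => ?_)
  obtain j | j | j := i
  · show B.cE (B.φ (B.E 0) (B.E n)) j = B.cE ((B.alpha * (n:ℂ)) • B.E n) j
    rw [cE_smul, cE_E]
    by_cases hj : n = j
    · subst hj
      rw [if_pos rfl, mul_one]
      exact hA n
    · rw [if_neg hj, mul_zero]
      refine B.suppE (heig n) ?_
      intro hc
      have : n = j := by exact_mod_cast hc.symm
      exact hj this
  · show B.cM (B.φ (B.E 0) (B.E n)) j = B.cM ((B.alpha * (n:ℂ)) • B.E n) j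
    rw [cM_smul, cM_E, mul_zero]
    exact hM0 n j
  · show B.cY (B.φ (B.E 0) (B.E n)) j = B.cY ((B.alpha * (n:ℂ)) • B.E n) j
    rw [cY_smul, cY_E, mul_zero]
    exact hY0 n j


lemma mainE (hco : ¬ (lam = 1 ∧ ∃ r : ℤ, (r : ℂ) = 2 * (mu - s)))
    (n : ℤ) (hn : n ≠ 0) (y : V) (d : ℂ)
    (hy : ⁅B.E 0, y⁆ = d • y) (hnd : (n:ℂ) ≠ d) :
    B.φ (B.E n) y = B.alpha • ⁅B.E n, y⁆ := by
  have h := (B.W2 (B.E n) y (n:ℂ) d (B.lieE0_E n) hy hnd).1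
  rw [B.DE hco n, smul_lie] at h
  have hn' : ((n:ℤ):ℂ) ≠ 0 := Int.cast_ne_zero.mpr hn
  refine smul_right_injective V hn' ?_
  beta_reduce
  rw [← h, smul_smul]
  congr 1
  ring

lemma main (hco : ¬ (lam = 1 ∧ ∃ r : ℤ, (r : ℂ) = 2 * (mu - s)))
    (x y : V) (c d : ℂ)
    (hx : ⁅B.E 0, x⁆ = c • x) (hy : ⁅B.E 0, y⁆ = d • y) (hcd : c ≠ d)
    (hDx : B.φ (B.E 0) x = (B.alpha * c) • x) (hDy : B.φ (B.E 0) y = (B.alpha * d) • y) :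
    B.φ x y = B.alpha • ⁅x, y⁆ := by
  by_cases hc : c = 0
  · have hd : d ≠ 0 := fun h => hcd (by rw [hc, h])
    have h := (B.W2 x y c d hx hy hcd).2
    rw [hDy, smul_lie] at h
    have h2 : d • B.φ x y = (B.alpha * d) • ⁅x, y⁆ := by
      rw [← lie_skew, smul_neg, h, neg_neg]
    refine smul_right_injective V hd ?_
    beta_reduce
    rw [h2, smul_smul]
    congr 1
    ring
  · have h := (B.W2 x y c d hx hy hcd).1
    rw [hDx, smul_lie] at h
    refine smul_right_injective V hc ?_
    beta_reduce
    rw [← h, smul_smul]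
    congr 1
    ring

lemma DM (hco : ¬ (lam = 1 ∧ ∃ r : ℤ, (r : ℂ) = 2 * (mu - s))) :
    ∀ m : ℤ, B.φ (B.E 0) (B.M m) = (B.alpha * ((m:ℂ) + 2*mu)) • B.M m := by
  have hDM1 : ∀ m : ℤ, (m:ℂ) + 2*mu ≠ 0 →
      B.φ (B.E 0) (B.M m) = (B.alpha * ((m:ℂ) + 2*mu)) • B.M m := by
    intro m hm
    set w := B.φ (B.E 0) (B.M m) - (B.alpha * ((m:ℂ) + 2*mu)) • B.M m with hw
    have hweig : ⁅B.E 0, w⁆ = ((m:ℂ) + 2*mu) • w := by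
      rw [hw, lie_sub, B.D_eig (B.lieE0_M m), lie_smul, B.lieE0_M, smul_sub, smul_smul,
        smul_smul]
      ring_nf
    have hwE : ∀ n : ℤ, n ≠ 0 → (n:ℂ) ≠ (m:ℂ) + 2*mu → ⁅w, B.E n⁆ = 0 := by
      intro n hn hneq
      have h2 := (B.W2 (B.E n) (B.M m) (n:ℂ) ((m:ℂ)+2*mu)
        (B.lieE0_E n) (B.lieE0_M m) hneq).2
      have h3 : B.φ (B.E n) (B.M m) = B.alpha • ⁅B.E n, B.M m⁆ :=
        B.mainE hco n hn (B.M m) _ (B.lieE0_M m) hneq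
      rw [h3] at h2
      rw [hw, sub_lie, h2, smul_lie, ← lie_skew (B.E n) (B.M m)]
      rw [smul_smul, smul_neg, neg_neg, ← sub_smul]
      convert zero_smul ℂ _ using 2
      ring
    have hcoord : ∀ i, B.basis.repr w i = 0 := by
      intro i
      obtain j | j | j := i
      · show B.cE w j = 0
        by_cases hj : (j:ℂ) = (m:ℂ) + 2*mu
        · have hj0 : j ≠ 0 := by
            intro h
            rw [h] at hj
            apply hm
            push_cast at hj
            linear_combination -hj
          obtain ⟨n, hn0, hnj⟩ : ∃ n : ℤ, n ≠ 0 ∧ n ≠ j := by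
            by_cases h1 : j = 1
            · exact ⟨2, by norm_num, by omega⟩
            · exact ⟨1, one_ne_zero, fun h => h1 h.symm⟩
          have hneq : (n:ℂ) ≠ (m:ℂ) + 2*mu := by rw [← hj]; exact int_ne_cast hnj
          have h0 := congrArg (fun v => B.cE v (j+n)) (hwE n hn0 hneq)
          simp only [cE_zero] at h0
          rw [B.cE_lieE' n w (j+n), show j+n-n = j by omega] at h0
          push_cast at h0
          have h1 : ((j:ℂ) - (n:ℂ)) * B.cE w j = 0 := by linear_combination -h0
          rcases mul_eq_zero.mp h1 with h | h
          · exfalso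
            apply hnj
            have : (n:ℂ) = (j:ℂ) := by linear_combination -h
            exact_mod_cast this
          · exact h
        · exact B.suppE hweig hj
      · show B.cM w j = 0
        by_cases hj : j = m
        · subst hj
          obtain ⟨n, hn0, hn1, hn2⟩ := pickc ((j:ℂ)+2*mu) lam hm
          have h0 := congrArg (fun v => B.cM v (j+n)) (hwE n hn0 hn1)
          simp only [cM_zero] at h0
          rw [B.cM_lieE' n w (j+n), show j+n-n = j by omega] at h0
          push_cast at h0
          have h1 : ((j:ℂ) + 2*mu - lam*(n:ℂ)) * B.cM w j = 0 := by linear_combination -h0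
          rcases mul_eq_zero.mp h1 with h | h
          · exact absurd (by linear_combination -h) hn2
          · exact h
        · refine B.suppM hweig ?_
          intro hcon
          exact hj (by exact_mod_cast (by linear_combination hcon : (j:ℂ) = (m:ℂ)))
      · show B.cY w j = 0
        by_cases hj : (j:ℂ) + s + mu = (m:ℂ) + 2*mu
        · obtain ⟨n, hn0, hn1, hn2⟩ := pickc ((m:ℂ)+2*mu) ((lam+1)/2) hm
          have h0 := congrArg (fun v => B.cY v (j+n)) (hwE n hn0 hn1)
          simp only [cY_zero] at h0
          rw [B.cY_lieE' n w (j+n), show j+n-n = j by omega] at h0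
          push_cast at h0
          have h1 : ((m:ℂ) + 2*mu - (lam+1)/2*(n:ℂ)) * B.cY w j = 0 := by
            linear_combination -h0 - B.cY w j * hj
          rcases mul_eq_zero.mp h1 with h | h
          · exact absurd (by linear_combination -h) hn2
          · exact h
        · exact B.suppY hweig hj
    have hw0 : w = 0 := by
      apply (LinearEquiv.map_eq_zero_iff B.basis.repr).mp
      exact Finsupp.ext fun i => by rw [hcoord i]; simp
    rw [hw] at hw0
    exact sub_eq_zero.mp hw0
  have hDM2 : ∀ m : ℤ, (m:ℂ) + 2*mu = 0 → B.φ (B.E 0) (B.M m) = 0 := by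
    intro m hm
    by_cases hl : lam = -1
    · -- use coordinates
      set w := B.φ (B.E 0) (B.M m) with hw
      have hweig : ⁅B.E 0, w⁆ = ((m:ℂ) + 2*mu) • w := B.D_eig (B.lieE0_M m)
      have hwE : ∀ n : ℤ, n ≠ 0 → ⁅w, B.E n⁆ = 0 := by
        intro n hn
        have hneq : (n:ℂ) ≠ (m:ℂ) + 2*mu := by
          rw [hm]; exact Int.cast_ne_zero.mpr hn
        have h2 := (B.W2 (B.E n) (B.M m) (n:ℂ) ((m:ℂ)+2*mu)
          (B.lieE0_E n) (B.lieE0_M m) hneq).2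
        rw [hm, zero_smul, neg_zero] at h2
        exact h2
      have hwY : ∀ k : ℤ, (k:ℂ) + s + mu ≠ 0 → ⁅w, B.Y k⁆ = 0 := by
        intro k hk
        have hcd : (m:ℂ) + 2*mu ≠ (k:ℂ) + s + mu := by rw [hm]; exact fun h => hk h.symm
        have h2 := (B.W2 (B.M m) (B.Y k) ((m:ℂ)+2*mu) ((k:ℂ)+s+mu)
          (B.lieE0_M m) (B.lieE0_Y k) hcd).1
        rw [hm, zero_smul] at h2
        exact h2
      have hcoord : ∀ i, B.basis.repr w i = 0 := by
        intro i
        obtain j | j | j := i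
        · show B.cE w j = 0
          by_cases hj : (j:ℂ) = (m:ℂ) + 2*mu
          · have h0 := congrArg (fun v => B.cE v (j+1)) (hwE 1 one_ne_zero)
            simp only [cE_zero] at h0
            rw [B.cE_lieE' 1 w (j+1), show j+1-1 = j by omega] at h0
            push_cast at h0
            have h1 : ((j:ℂ) - 1) * B.cE w j = 0 := by linear_combination -h0
            rcases mul_eq_zero.mp h1 with h | h
            · exfalso
              rw [hm] at hj
              have : (1:ℂ) = 0 := by linear_combination hj - h
              norm_num at this
            · exact h
          · exact B.suppE hweig hj
        · show B.cM w j = 0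
          by_cases hj : j = m
          · subst hj
            have h0 := congrArg (fun v => B.cM v (j+1)) (hwE 1 one_ne_zero)
            simp only [cM_zero] at h0
            rw [B.cM_lieE' 1 w (j+1), show j+1-1 = j by omega] at h0
            push_cast at h0
            have h1 : ((j:ℂ) - lam + 2*mu) * B.cM w j = 0 := by linear_combination -h0
            rcases mul_eq_zero.mp h1 with h | h
            · exfalso
              rw [hl] at h
              have : (1:ℂ) = 0 := by linear_combination h - hm
              norm_num at this
            · exact h
          · refine B.suppM hweig ?_
            intro hcon
            exact hj (by exact_mod_cast (by linear_combination hcon : (j:ℂ) = (m:ℂ)))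
        · show B.cY w j = 0
          by_cases hj : (j:ℂ) + s + mu = (m:ℂ) + 2*mu
          · have hk : ((j+1:ℤ):ℂ) + s + mu ≠ 0 := by
              intro hcon
              rw [hm] at hj
              push_cast at hcon
              have : (1:ℂ) = 0 := by linear_combination hcon - hj
              norm_num at this
            have h0 := congrArg (fun v => B.cM v (j + (j+1) + t)) (hwY (j+1) hk)
            simp only [cM_zero] at h0
            rw [B.cM_lieY' (j+1) w (j + (j+1) + t),
              show j + (j+1) + t - (j+1) - t = j by omega] at h0
            push_cast at h0
            have h1 : B.cY w j = 0 := by linear_combination h0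
            exact h1
          · exact B.suppY hweig hj
      apply (LinearEquiv.map_eq_zero_iff B.basis.repr).mp
      exact Finsupp.ext fun i => by rw [hcoord i]; simp
    · -- derivation route
      have h := B.hbd₂ (B.E 0) (B.E 1) (B.M (m-1))
      have hbr : ⁅B.E 1, B.M (m-1)⁆ = (-1-lam) • B.M m := by
        have h2 := B.bracket_EM 1 (m-1)
        rw [show (1:ℤ) + (m-1) = m by omega] at h2
        rw [h2]
        congr 1
        push_cast
        linear_combination hm
      have hDm1 : B.φ (B.E 0) (B.M (m-1))
          = (B.alpha * (((m-1:ℤ):ℂ) + 2*mu)) • B.M (m-1) := by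
        refine hDM1 (m-1) ?_
        intro hcon
        push_cast at hcon
        have : (1:ℂ) = 0 := by linear_combination hm - hcon
        norm_num at this
      rw [hbr, map_smul, B.DE hco 1, hDm1, smul_lie, lie_smul, hbr] at h
      have hc : (B.alpha * (((m-1:ℤ):ℂ) + 2*mu)) = -B.alpha := by
        push_cast
        linear_combination B.alpha * hm
      rw [hc] at h
      have hz : (B.alpha * ((1:ℤ):ℂ)) • ((-1-lam) • B.M m)
          + (-B.alpha) • ((-1-lam) • B.M m) = 0 := by
        rw [← add_smul]
        convert zero_smul ℂ _ using 2
        push_cast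
        ring
      rw [hz] at h
      have hn0 : (-1-lam : ℂ) ≠ 0 := fun hcc => hl (by linear_combination -hcc)
      rcases smul_eq_zero.mp h with h' | h'
      · exact absurd h' hn0
      · exact h'
  intro m
  by_cases hm : (m:ℂ) + 2*mu = 0
  · rw [hDM2 m hm, hm, mul_zero, zero_smul]
  · exact hDM1 m hm


lemma DY (hco : ¬ (lam = 1 ∧ ∃ r : ℤ, (r : ℂ) = 2 * (mu - s))) :
    ∀ m : ℤ, B.φ (B.E 0) (B.Y m) = (B.alpha * ((m:ℂ) + s + mu)) • B.Y m := by
  have hDY1 : ∀ m : ℤ, (m:ℂ) + s + mu ≠ 0 →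
      B.φ (B.E 0) (B.Y m) = (B.alpha * ((m:ℂ) + s + mu)) • B.Y m := by
    intro m hm
    set w := B.φ (B.E 0) (B.Y m) - (B.alpha * ((m:ℂ) + s + mu)) • B.Y m with hw
    have hweig : ⁅B.E 0, w⁆ = ((m:ℂ) + s + mu) • w := by
      rw [hw, lie_sub, B.D_eig (B.lieE0_Y m), lie_smul, B.lieE0_Y, smul_sub, smul_smul,
        smul_smul]
      ring_nf
    have hwE : ∀ n : ℤ, n ≠ 0 → (n:ℂ) ≠ (m:ℂ) + s + mu → ⁅w, B.E n⁆ = 0 := by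
      intro n hn hneq
      have h2 := (B.W2 (B.E n) (B.Y m) (n:ℂ) ((m:ℂ)+s+mu)
        (B.lieE0_E n) (B.lieE0_Y m) hneq).2
      have h3 : B.φ (B.E n) (B.Y m) = B.alpha • ⁅B.E n, B.Y m⁆ :=
        B.mainE hco n hn (B.Y m) _ (B.lieE0_Y m) hneq
      rw [h3] at h2
      rw [hw, sub_lie, h2, smul_lie, ← lie_skew (B.E n) (B.Y m)]
      rw [smul_smul, smul_neg, neg_neg, ← sub_smul]
      convert zero_smul ℂ _ using 2
      ring
    have hcoord : ∀ i, B.basis.repr w i = 0 := by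
      intro i
      obtain j | j | j := i
      · show B.cE w j = 0
        by_cases hj : (j:ℂ) = (m:ℂ) + s + mu
        · have hj0 : j ≠ 0 := by
            intro h
            rw [h] at hj
            apply hm
            push_cast at hj
            linear_combination -hj
          obtain ⟨n, hn0, hnj⟩ : ∃ n : ℤ, n ≠ 0 ∧ n ≠ j := by
            by_cases h1 : j = 1
            · exact ⟨2, by norm_num, by omega⟩
            · exact ⟨1, one_ne_zero, fun h => h1 h.symm⟩
          have hneq : (n:ℂ) ≠ (m:ℂ) + s + mu := by rw [← hj]; exact int_ne_cast hnj
          have h0 := congrArg (fun v => B.cE v (j+n)) (hwE n hn0 hneq)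
          simp only [cE_zero] at h0
          rw [B.cE_lieE' n w (j+n), show j+n-n = j by omega] at h0
          push_cast at h0
          have h1 : ((j:ℂ) - (n:ℂ)) * B.cE w j = 0 := by linear_combination -h0
          rcases mul_eq_zero.mp h1 with h | h
          · exfalso
            apply hnj
            have : (n:ℂ) = (j:ℂ) := by linear_combination -h
            exact_mod_cast this
          · exact h
        · exact B.suppE hweig hj
      · show B.cM w j = 0
        by_cases hj : (j:ℂ) + 2*mu = (m:ℂ) + s + mu
        · obtain ⟨n, hn0, hn1, hn2⟩ := pickc ((m:ℂ)+s+mu) lam hm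
          have h0 := congrArg (fun v => B.cM v (j+n)) (hwE n hn0 hn1)
          simp only [cM_zero] at h0
          rw [B.cM_lieE' n w (j+n), show j+n-n = j by omega] at h0
          push_cast at h0
          have h1 : ((m:ℂ) + s + mu - lam*(n:ℂ)) * B.cM w j = 0 := by
            linear_combination -h0 - B.cM w j * hj
          rcases mul_eq_zero.mp h1 with h | h
          · exact absurd (by linear_combination -h) hn2
          · exact h
        · exact B.suppM hweig hj
      · show B.cY w j = 0
        by_cases hj : j = m
        · subst hj
          obtain ⟨n, hn0, hn1, hn2⟩ := pickc ((j:ℂ)+s+mu) ((lam+1)/2) hm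
          have h0 := congrArg (fun v => B.cY v (j+n)) (hwE n hn0 hn1)
          simp only [cY_zero] at h0
          rw [B.cY_lieE' n w (j+n), show j+n-n = j by omega] at h0
          push_cast at h0
          have h1 : ((j:ℂ) + s + mu - (lam+1)/2*(n:ℂ)) * B.cY w j = 0 := by
            linear_combination -h0
          rcases mul_eq_zero.mp h1 with h | h
          · exact absurd (by linear_combination -h) hn2
          · exact h
        · refine B.suppY hweig ?_
          intro hcon
          exact hj (by exact_mod_cast (by linear_combination hcon : (j:ℂ) = (m:ℂ)))
    have hw0 : w = 0 := by
      apply (LinearEquiv.map_eq_zero_iff B.basis.repr).mp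
      exact Finsupp.ext fun i => by rw [hcoord i]; simp
    rw [hw] at hw0
    exact sub_eq_zero.mp hw0
  have hDY2 : ∀ m : ℤ, (m:ℂ) + s + mu = 0 → B.φ (B.E 0) (B.Y m) = 0 := by
    intro m hm
    by_cases hl : lam = -3
    · set w := B.φ (B.E 0) (B.Y m) with hw
      have hweig : ⁅B.E 0, w⁆ = ((m:ℂ) + s + mu) • w := B.D_eig (B.lieE0_Y m)
      have hwE : ∀ n : ℤ, n ≠ 0 → ⁅w, B.E n⁆ = 0 := by
        intro n hn
        have hneq : (n:ℂ) ≠ (m:ℂ) + s + mu := by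
          rw [hm]; exact Int.cast_ne_zero.mpr hn
        have h2 := (B.W2 (B.E n) (B.Y m) (n:ℂ) ((m:ℂ)+s+mu)
          (B.lieE0_E n) (B.lieE0_Y m) hneq).2
        rw [hm, zero_smul, neg_zero] at h2
        exact h2
      have hcoord : ∀ i, B.basis.repr w i = 0 := by
        intro i
        obtain j | j | j := i
        · show B.cE w j = 0
          by_cases hj : (j:ℂ) = (m:ℂ) + s + mu
          · have h0 := congrArg (fun v => B.cE v (j+1)) (hwE 1 one_ne_zero)
            simp only [cE_zero] at h0
            rw [B.cE_lieE' 1 w (j+1), show j+1-1 = j by omega] at h0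
            push_cast at h0
            have h1 : ((j:ℂ) - 1) * B.cE w j = 0 := by linear_combination -h0
            rcases mul_eq_zero.mp h1 with h | h
            · exfalso
              rw [hm] at hj
              have : (1:ℂ) = 0 := by linear_combination hj - h
              norm_num at this
            · exact h
          · exact B.suppE hweig hj
        · show B.cM w j = 0
          by_cases hj : (j:ℂ) + 2*mu = (m:ℂ) + s + mu
          · have h0 := congrArg (fun v => B.cM v (j+1)) (hwE 1 one_ne_zero)
            simp only [cM_zero] at h0
            rw [B.cM_lieE' 1 w (j+1), show j+1-1 = j by omega] at h0
            push_cast at h0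
            have h1 : ((j:ℂ) - lam + 2*mu) * B.cM w j = 0 := by linear_combination -h0
            rcases mul_eq_zero.mp h1 with h | h
            · exfalso
              rw [hm] at hj
              rw [hl] at h
              have : (3:ℂ) = 0 := by linear_combination h - hj
              norm_num at this
            · exact h
          · exact B.suppM hweig hj
        · show B.cY w j = 0
          by_cases hj : j = m
          · subst hj
            have h0 := congrArg (fun v => B.cY v (j+1)) (hwE 1 one_ne_zero)
            simp only [cY_zero] at h0
            rw [B.cY_lieE' 1 w (j+1), show j+1-1 = j by omega] at h0
            push_cast at h0
            have h1 : ((j:ℂ) + s + mu - (lam+1)/2) * B.cY w j = 0 := by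
              linear_combination -h0
            rcases mul_eq_zero.mp h1 with h | h
            · exfalso
              rw [hl] at h
              have : (1:ℂ) = 0 := by linear_combination h - hm
              norm_num at this
            · exact h
          · refine B.suppY hweig ?_
            intro hcon
            exact hj (by exact_mod_cast (by linear_combination hcon : (j:ℂ) = (m:ℂ)))
      apply (LinearEquiv.map_eq_zero_iff B.basis.repr).mp
      exact Finsupp.ext fun i => by rw [hcoord i]; simp
    · have h := B.hbd₂ (B.E 0) (B.E 1) (B.Y (m-1))
      have hbr : ⁅B.E 1, B.Y (m-1)⁆ = (-1-(lam+1)/2) • B.Y m := by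
        have h2 := B.bracket_EY 1 (m-1)
        rw [show (1:ℤ) + (m-1) = m by omega] at h2
        rw [h2]
        congr 1
        push_cast
        linear_combination hm
      have hDm1 : B.φ (B.E 0) (B.Y (m-1))
          = (B.alpha * (((m-1:ℤ):ℂ) + s + mu)) • B.Y (m-1) := by
        refine hDY1 (m-1) ?_
        intro hcon
        push_cast at hcon
        have : (1:ℂ) = 0 := by linear_combination hm - hcon
        norm_num at this
      rw [hbr, map_smul, B.DE hco 1, hDm1, smul_lie, lie_smul, hbr] at h
      have hc : (B.alpha * (((m-1:ℤ):ℂ) + s + mu)) = -B.alpha := by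
        push_cast
        linear_combination B.alpha * hm
      rw [hc] at h
      have hz : (B.alpha * ((1:ℤ):ℂ)) • ((-1-(lam+1)/2) • B.Y m)
          + (-B.alpha) • ((-1-(lam+1)/2) • B.Y m) = 0 := by
        rw [← add_smul]
        convert zero_smul ℂ _ using 2
        push_cast
        ring
      rw [hz] at h
      have hn0 : (-1-(lam+1)/2 : ℂ) ≠ 0 := fun hcc => hl (by linear_combination -2*hcc)
      rcases smul_eq_zero.mp h with h' | h'
      · exact absurd h' hn0
      · exact h'
  intro m
  by_cases hm : (m:ℂ) + s + mu = 0
  · rw [hDY2 m hm, hm, mul_zero, zero_smul]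
  · exact hDY1 m hm


lemma keyEE (hco : ¬ (lam = 1 ∧ ∃ r : ℤ, (r : ℂ) = 2 * (mu - s))) (n m : ℤ) :
    B.φ (B.E n) (B.E m) = B.alpha • ⁅B.E n, B.E m⁆ := by
  by_cases h : n = m
  · subst h
    rw [B.phi_self, lie_self, smul_zero]
  · exact B.main hco (B.E n) (B.E m) n m (B.lieE0_E n) (B.lieE0_E m) (int_ne_cast h)
      (B.DE hco n) (B.DE hco m)

lemma keyMM (hco : ¬ (lam = 1 ∧ ∃ r : ℤ, (r : ℂ) = 2 * (mu - s))) (n m : ℤ) :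
    B.φ (B.M n) (B.M m) = B.alpha • ⁅B.M n, B.M m⁆ := by
  by_cases h : n = m
  · subst h
    rw [B.phi_self, lie_self, smul_zero]
  · refine B.main hco (B.M n) (B.M m) _ _ (B.lieE0_M n) (B.lieE0_M m) ?_
      (B.DM hco n) (B.DM hco m)
    intro hx
    exact h (by exact_mod_cast (by linear_combination hx : (n:ℂ) = (m:ℂ)))

lemma keyYY (hco : ¬ (lam = 1 ∧ ∃ r : ℤ, (r : ℂ) = 2 * (mu - s))) (n m : ℤ) :
    B.φ (B.Y n) (B.Y m) = B.alpha • ⁅B.Y n, B.Y m⁆ := by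
  by_cases h : n = m
  · subst h
    rw [B.phi_self, lie_self, smul_zero]
  · refine B.main hco (B.Y n) (B.Y m) _ _ (B.lieE0_Y n) (B.lieE0_Y m) ?_
      (B.DY hco n) (B.DY hco m)
    intro hx
    exact h (by exact_mod_cast (by linear_combination hx : (n:ℂ) = (m:ℂ)))

lemma keyEM (hco : ¬ (lam = 1 ∧ ∃ r : ℤ, (r : ℂ) = 2 * (mu - s))) (n m : ℤ) :
    B.φ (B.E n) (B.M m) = B.alpha • ⁅B.E n, B.M m⁆ := by
  by_cases h : (n:ℂ) = (m:ℂ) + 2*mu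
  · by_cases hn : n = 0
    · subst hn
      rw [B.DM hco m, B.lieE0_M, smul_smul]
    · obtain ⟨k, hk0, hkn, hkc⟩ := pick_k n hn (1+lam)
      have hcoef : ((m-k:ℤ):ℂ) - lam*(k:ℂ) + 2*mu ≠ 0 := by
        intro hx
        apply hkc
        push_cast at hx
        linear_combination h + hx
      have hbr : ⁅B.E k, B.M (m-k)⁆ = (((m-k:ℤ):ℂ) - lam*(k:ℂ) + 2*mu) • B.M m := by
        have h2 := B.bracket_EM k (m-k)
        rw [show k + (m-k) = m by omega] at h2
        exact h2
      have h2 := B.hbd₂ (B.E n) (B.E k) (B.M (m-k))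
      rw [hbr, map_smul] at h2
      have hek : B.φ (B.E n) (B.E k) = B.alpha • ⁅B.E n, B.E k⁆ :=
        B.mainE hco n hn (B.E k) k (B.lieE0_E k) (int_ne_cast (fun hh => hkn hh.symm))
      have hmk : B.φ (B.E n) (B.M (m-k)) = B.alpha • ⁅B.E n, B.M (m-k)⁆ := by
        refine B.mainE hco n hn (B.M (m-k)) _ (B.lieE0_M (m-k)) ?_
        intro hx
        push_cast at hx
        have : (k:ℂ) = 0 := by linear_combination hx - h
        exact hk0 (by exact_mod_cast this)
      rw [hek, hmk, smul_lie, lie_smul, ← smul_add, ← leibniz_lie, hbr, lie_smul] at h2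
      refine smul_right_injective V hcoef ?_
      beta_reduce
      rw [h2, smul_smul, smul_smul]
      congr 1
      ring
  · exact B.main hco (B.E n) (B.M m) n _ (B.lieE0_E n) (B.lieE0_M m) h
      (B.DE hco n) (B.DM hco m)

lemma keyEY (hco : ¬ (lam = 1 ∧ ∃ r : ℤ, (r : ℂ) = 2 * (mu - s))) (n m : ℤ) :
    B.φ (B.E n) (B.Y m) = B.alpha • ⁅B.E n, B.Y m⁆ := by
  by_cases h : (n:ℂ) = (m:ℂ) + s + mu
  · by_cases hn : n = 0
    · subst hn
      rw [B.DY hco m, B.lieE0_Y, smul_smul]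
    · obtain ⟨k, hk0, hkn, hkc⟩ := pick_k n hn (1+(lam+1)/2)
      have hcoef : ((m-k:ℤ):ℂ) + s - (lam+1)/2*(k:ℂ) + mu ≠ 0 := by
        intro hx
        apply hkc
        push_cast at hx
        linear_combination h + hx
      have hbr : ⁅B.E k, B.Y (m-k)⁆ = (((m-k:ℤ):ℂ) + s - (lam+1)/2*(k:ℂ) + mu) • B.Y m := by
        have h2 := B.bracket_EY k (m-k)
        rw [show k + (m-k) = m by omega] at h2
        exact h2
      have h2 := B.hbd₂ (B.E n) (B.E k) (B.Y (m-k))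
      rw [hbr, map_smul] at h2
      have hek : B.φ (B.E n) (B.E k) = B.alpha • ⁅B.E n, B.E k⁆ :=
        B.mainE hco n hn (B.E k) k (B.lieE0_E k) (int_ne_cast (fun hh => hkn hh.symm))
      have hmk : B.φ (B.E n) (B.Y (m-k)) = B.alpha • ⁅B.E n, B.Y (m-k)⁆ := by
        refine B.mainE hco n hn (B.Y (m-k)) _ (B.lieE0_Y (m-k)) ?_
        intro hx
        push_cast at hx
        have : (k:ℂ) = 0 := by linear_combination hx - h
        exact hk0 (by exact_mod_cast this)
      rw [hek, hmk, smul_lie, lie_smul, ← smul_add, ← leibniz_lie, hbr, lie_smul] at h2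
      refine smul_right_injective V hcoef ?_
      beta_reduce
      rw [h2, smul_smul, smul_smul]
      congr 1
      ring
  · exact B.main hco (B.E n) (B.Y m) n _ (B.lieE0_E n) (B.lieE0_Y m) h
      (B.DE hco n) (B.DY hco m)

lemma keyMY (hco : ¬ (lam = 1 ∧ ∃ r : ℤ, (r : ℂ) = 2 * (mu - s))) (n m : ℤ) :
    B.φ (B.M n) (B.Y m) = B.alpha • ⁅B.M n, B.Y m⁆ := by
  by_cases h : (n:ℂ) + 2*mu = (m:ℂ) + s + mu
  · have hlam1 : lam ≠ 1 := by
      intro hl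
      refine hco ⟨hl, ⟨2*(m-n), ?_⟩⟩
      push_cast
      linear_combination -2*h
    have core : ∀ k : ℤ, k ≠ 0 → (k:ℂ) ≠ (n:ℂ) + 2*mu →
        B.φ (B.M n) (B.Y m) = B.alpha • ⁅B.M n, B.Y m⁆ := by
      intro k hk0 hkw
      by_cases hc1 : ((m-k:ℤ):ℂ) + s - (lam+1)/2*(k:ℂ) + mu ≠ 0
      · -- route 1 : expand φ (M n) ⁅E k, Y (m-k)⁆
        have hbr : ⁅B.E k, B.Y (m-k)⁆
            = (((m-k:ℤ):ℂ) + s - (lam+1)/2*(k:ℂ) + mu) • B.Y m := by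
          have h2 := B.bracket_EY k (m-k)
          rw [show k + (m-k) = m by omega] at h2
          exact h2
        have h2 := B.hbd₂ (B.M n) (B.E k) (B.Y (m-k))
        rw [hbr, map_smul] at h2
        have hme : B.φ (B.M n) (B.E k) = B.alpha • ⁅B.M n, B.E k⁆ := by
          refine B.main hco (B.M n) (B.E k) ((n:ℂ)+2*mu) k (B.lieE0_M n) (B.lieE0_E k)
            (fun hx => hkw hx.symm) (B.DM hco n) (B.DE hco k)
        have hmy : B.φ (B.M n) (B.Y (m-k)) = 0 := by
          have hcd : (n:ℂ) + 2*mu ≠ ((m-k:ℤ):ℂ) + s + mu := by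
            intro hx
            apply hk0
            have : (k:ℂ) = 0 := by push_cast at hx ⊢; linear_combination hx - h
            exact_mod_cast this
          have h3 := B.main hco (B.M n) (B.Y (m-k)) ((n:ℂ)+2*mu) (((m-k:ℤ):ℂ)+s+mu)
            (B.lieE0_M n) (B.lieE0_Y (m-k)) hcd (B.DM hco n) (B.DY hco (m-k))
          rw [h3, B.bracket_MY, smul_zero]
        have hz : ⁅B.alpha • ⁅B.M n, B.E k⁆, B.Y (m-k)⁆ = 0 := by
          have e : ⁅B.M n, B.E k⁆ = -(((n:ℂ) - lam*(k:ℂ) + 2*mu) • B.M (k+n)) := by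
            rw [← lie_skew, B.bracket_EM]
          rw [e]
          simp [B.bracket_MY]
        rw [hme, hmy, lie_zero, add_zero, hz] at h2
        have hphi : B.φ (B.M n) (B.Y m) = 0 := by
          rcases smul_eq_zero.mp h2 with h' | h'
          · exact absurd h' hc1
          · exact h'
        rw [hphi, B.bracket_MY, smul_zero]
      · -- route 2 : expand φ ⁅E k, M (n-k)⁆ (Y m)
        push_neg at hc1
        have hc2 : ((n-k:ℤ):ℂ) - lam*(k:ℂ) + 2*mu ≠ 0 := by
          intro hx
          push_cast at hc1 hx
          have hk : (k:ℂ) ≠ 0 := Int.cast_ne_zero.mpr hk0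
          apply hk
          have hfac : ((lam-1)/2) * (k:ℂ) = 0 := by linear_combination hc1 - hx + h
          rcases mul_eq_zero.mp hfac with hf | hf
          · exact absurd (by linear_combination 2*hf : lam = 1) hlam1
          · exact hf
        have hbr : ⁅B.E k, B.M (n-k)⁆
            = (((n-k:ℤ):ℂ) - lam*(k:ℂ) + 2*mu) • B.M n := by
          have h2 := B.bracket_EM k (n-k)
          rw [show k + (n-k) = n by omega] at h2
          exact h2
        have h2 := B.hbd₁ (B.E k) (B.M (n-k)) (B.Y m)
        rw [hbr, map_smul, LinearMap.smul_apply] at h2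
        have hmy2 : B.φ (B.M (n-k)) (B.Y m) = 0 := by
          have hcd : ((n-k:ℤ):ℂ) + 2*mu ≠ (m:ℂ) + s + mu := by
            intro hx
            apply hk0
            have : (k:ℂ) = 0 := by push_cast at hx ⊢; linear_combination h - hx
            exact_mod_cast this
          have h3 := B.main hco (B.M (n-k)) (B.Y m) (((n-k:ℤ):ℂ)+2*mu) ((m:ℂ)+s+mu)
            (B.lieE0_M (n-k)) (B.lieE0_Y m) hcd (B.DM hco (n-k)) (B.DY hco m)
          rw [h3, B.bracket_MY, smul_zero]
        have hey : B.φ (B.E k) (B.Y m) = B.alpha • ⁅B.E k, B.Y m⁆ := by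
          refine B.mainE hco k hk0 (B.Y m) _ (B.lieE0_Y m) ?_
          intro hx
          exact hkw (hx.trans h.symm)
        rw [hmy2, lie_zero, hey] at h2
        have hz : ⁅B.alpha • ⁅B.E k, B.Y m⁆, B.M (n-k)⁆ = 0 := by
          rw [B.bracket_EY k m]
          rw [smul_smul, smul_lie, ← lie_skew (B.Y (k+m)) (B.M (n-k)), B.bracket_MY]
          simp
        rw [hz, zero_add] at h2
        have hphi : B.φ (B.M n) (B.Y m) = 0 := by
          rcases smul_eq_zero.mp h2 with h' | h'
          · exact absurd h' hc2
          · exact h'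
        rw [hphi, B.bracket_MY, smul_zero]
    by_cases h1 : (1:ℂ) = (n:ℂ) + 2*mu
    · refine core 2 (by norm_num) ?_
      rw [← h1]
      norm_num
    · exact core 1 one_ne_zero (by push_cast; exact fun hh => h1 hh)
  · exact B.main hco (B.M n) (B.Y m) _ _ (B.lieE0_M n) (B.lieE0_Y m) h
      (B.DM hco n) (B.DY hco m)

lemma skewflip {x y : V} (α : ℂ) (hxy : B.φ x y = α • ⁅x, y⁆) :
    B.φ y x = α • ⁅y, x⁆ := by
  rw [B.hskew y x, hxy, ← smul_neg, lie_skew]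

attribute [local instance] LieRing.ofAssociativeRing

lemma final (hco : ¬ (lam = 1 ∧ ∃ r : ℤ, (r : ℂ) = 2 * (mu - s))) :
    ∀ x y : V, B.φ x y = B.alpha • ⁅x, y⁆ := by
  have key : ∀ i j, B.φ (B.basis i) (B.basis j) = B.alpha • ⁅B.basis i, B.basis j⁆ := by
    intro i j
    obtain n | n | n := i <;> obtain m | m | m := j <;>
      simp only [B.basis_inl, B.basis_inr_inl, B.basis_inr_inr]
    · exact B.keyEE hco n m
    · exact B.keyEM hco n m
    · exact B.keyEY hco n m
    · exact B.skewflip _ (B.keyEM hco m n)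
    · exact B.keyMM hco n m
    · exact B.keyMY hco n m
    · exact B.skewflip _ (B.keyEY hco m n)
    · exact B.skewflip _ (B.keyMY hco m n)
    · exact B.keyYY hco n m
  have hmaps : B.φ = B.alpha • (LieAlgebra.ad ℂ V).toLinearMap := by
    apply B.basis.ext
    intro i
    refine B.basis.ext fun j => ?_
    simp only [LinearMap.smul_apply, LieHom.coe_toLinearMap, LieAlgebra.ad_apply]
    exact key i j
  intro x y
  rw [hmaps]
  simp [LieAlgebra.ad_apply]

end BD
end DSVAux

/-- If it is not the case that `λ = 1` and `2(μ - s) ∈ ℤ`, then every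
skew-symmetric biderivation of `𝓛(λ, μ, s)` is inner. -/
theorem skew_biderivation_is_inner
    (lam mu s : ℂ) (t : ℤ) (V : Type*) [LieRing V] [LieAlgebra ℂ V]
    (𝒟 : DSV lam mu s t V) (hs : s = 0 ∨ s = 1 / 2)
    (hcond : ¬ (lam = 1 ∧ ∃ r : ℤ, (r : ℂ) = 2 * (mu - s)))
    (φ : V →ₗ[ℂ] V →ₗ[ℂ] V)
    (hskew : ∀ x y : V, φ x y = - φ y x)
    (hbd₁ : ∀ x y z : V, φ ⁅x, y⁆ z = ⁅x, φ y z⁆ + ⁅φ x z, y⁆)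
    (hbd₂ : ∀ x y z : V, φ x ⁅y, z⁆ = ⁅φ x y, z⁆ + ⁅y, φ x z⁆) :
    ∃ α : ℂ, ∀ x y : V, φ x y = α • ⁅x, y⁆ := by
  let B : DSVAux.BD lam mu s t V := ⟨𝒟, φ, hskew, hbd₁, hbd₂⟩
  exact ⟨B.alpha, B.final hcond⟩
end

section
/- Fix λ, μ ∈ ℂ and s ∈ {0, 1/2} with λ = 1 and 2(μ − s) ∈ ℤ. Then the linear map ψ₀ on 𝓛(λ,μ,s) is a commuting map, i.e. [ψ₀(x), x] = 0 for all x ∈ 𝓛(λ,μ,s), and ψ₀ is non-standard: there do not exist α ∈ ℂ and a linear map f : 𝓛(λ,μ,s) → Z(𝓛(λ,μ,s)) with ψ₀(x) = αx + f(x) for all x. -/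
/-- For `λ = 1` and `2(μ - s) ∈ ℤ`, the linear map `ψ₀` on `𝓛(λ, μ, s)` with
`ψ₀(L_n) = M_{n-2μ}`, `ψ₀(M_n) = ψ₀(Y_{n+s}) = 0` is a commuting map, and it
is non-standard: it is not of the form `x ↦ α • x + f x` with `f` a linear map
into the center. Here `p ∈ ℤ` satisfies `(p : ℂ) = 2μ`. -/
theorem psi0_commuting_and_nonstandard
    (lam mu s : ℂ) (t : ℤ) (V : Type*) [LieRing V] [LieAlgebra ℂ V]
    (𝒟 : DSV lam mu s t V) (hs : s = 0 ∨ s = 1 / 2)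
    (hlam : lam = 1) (hmu : ∃ r : ℤ, (r : ℂ) = 2 * (mu - s))
    (p : ℤ) (hp : (p : ℂ) = 2 * mu)
    (ψ₀ : V →ₗ[ℂ] V)
    (hψ₀L : ∀ n : ℤ, ψ₀ (𝒟.E n) = 𝒟.M (n - p))
    (hψ₀M : ∀ n : ℤ, ψ₀ (𝒟.M n) = 0)
    (hψ₀Y : ∀ n : ℤ, ψ₀ (𝒟.Y n) = 0) :
    (∀ x : V, ⁅ψ₀ x, x⁆ = 0) ∧
    ¬ ∃ (α : ℂ) (f : V →ₗ[ℂ] V),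
        (∀ x : V, f x ∈ LieAlgebra.center ℂ V) ∧ ∀ x : V, ψ₀ x = α • x + f x := by
  constructor
  · -- commuting
    have key : ∀ n m : ℤ, ⁅𝒟.M (n - p), 𝒟.E m⁆ = ((m : ℂ) - n) • 𝒟.M (m + (n - p)) := by
      intro n m
      rw [← lie_skew, 𝒟.bracket_EM, ← neg_smul]
      congr 1
      push_cast
      rw [hlam]
      linear_combination hp
    set B : V →ₗ[ℂ] V →ₗ[ℂ] V := LinearMap.mk₂ ℂ (fun x y => ⁅ψ₀ x, y⁆ + ⁅ψ₀ y, x⁆)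
      (by intro x x' y; simp only [map_add, add_lie, lie_add]; abel)
      (by intro c x y; simp only [map_smul, smul_lie, lie_smul, smul_add])
      (by intro x y y'; simp only [map_add, add_lie, lie_add]; abel)
      (by intro c x y; simp only [map_smul, smul_lie, lie_smul, smul_add]) with hBdef
    have hB : B = 0 := by
      apply 𝒟.basis.ext; intro i
      apply 𝒟.basis.ext; intro j
      rcases i with n | n | n <;> rcases j with m | m | m <;>
        simp only [hBdef, LinearMap.mk₂_apply, 𝒟.basis_inl, 𝒟.basis_inr_inl, 𝒟.basis_inr_inr,
          hψ₀L, hψ₀M, hψ₀Y, zero_lie, lie_zero, add_zero, zero_add, LinearMap.zero_apply,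
          𝒟.bracket_MM, 𝒟.bracket_MY, key]
      rw [show n + (m - p) = m + (n - p) by ring, ← add_smul]
      rw [show ((m : ℂ) - n) + ((n : ℂ) - m) = 0 by ring, zero_smul]
    intro x
    have h := LinearMap.congr_fun (LinearMap.congr_fun hB x) x
    simp only [hBdef, LinearMap.mk₂_apply, LinearMap.zero_apply] at h
    have h2 : (2 : ℂ) • ⁅ψ₀ x, x⁆ = 0 := by rw [two_smul]; exact h
    rcases smul_eq_zero.mp h2 with h' | h'
    · exact absurd h' (by norm_num)
    · exact h'
  · rintro ⟨α, f, hf, heq⟩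
    have h0 : f (𝒟.E 0) = 𝒟.M (0 - p) - α • 𝒟.E 0 := by
      have h := heq (𝒟.E 0)
      rw [hψ₀L] at h
      exact eq_sub_of_add_eq' h.symm
    have hc : ⁅𝒟.E 1, f (𝒟.E 0)⁆ = 0 :=
      (LieModule.mem_maxTrivSubmodule ℂ V V _).mp (hf (𝒟.E 0)) (𝒟.E 1)
    rw [h0, lie_sub, lie_smul, 𝒟.bracket_EM, 𝒟.bracket_EE] at hc
    rw [← 𝒟.basis_inr_inl (1 + (0 - p)), ← 𝒟.basis_inl (1 + 0)] at hc
    have h1 := congrArg (fun v => 𝒟.basis.repr v (Sum.inr (Sum.inl (1 + (0 - p))))) hc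
    simp only [map_sub, map_smul, Module.Basis.repr_self, Finsupp.smul_single, smul_eq_mul, mul_one,
      Finsupp.single_apply, Finsupp.coe_sub, Finsupp.coe_smul, Pi.sub_apply, Pi.smul_apply,
      Finsupp.coe_zero, Pi.zero_apply, map_zero] at h1
    rw [if_pos trivial, if_neg (by simp)] at h1
    push_cast [hlam] at h1
    exact one_ne_zero (by linear_combination -h1 - hp : (1:ℂ) = 0)
end

section
/- Fix λ, μ ∈ ℂ and s ∈ {0, 1/2} with λ = 1 and μ − s ∈ ℤ. Then the linear map ψ₁ on 𝓛(λ,μ,s) is a commuting map, i.e. [ψ₁(x), x] = 0 for all x ∈ 𝓛(λ,μ,s), and ψ₁ is non-standard: there do not exist α ∈ ℂ and a linear map f : 𝓛(λ,μ,s) → Z(𝓛(λ,μ,s)) with ψ₁(x) = αx + f(x) for all x. -/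
/-- For `λ = 1` and `μ - s ∈ ℤ`, the linear map `ψ₁` on `𝓛(λ, μ, s)` with
`ψ₁(L_n) = Y_{n-μ}`, `ψ₁(Y_{n+s}) = M_{n+s-μ}`, `ψ₁(M_n) = 0` is a commuting
map, and it is non-standard: it is not of the form `x ↦ α • x + f x` with `f`
a linear map into the center. Here `q ∈ ℤ` satisfies `(q : ℂ) = μ - s`. -/
theorem psi1_commuting_and_nonstandard
    (lam mu s : ℂ) (t : ℤ) (V : Type*) [LieRing V] [LieAlgebra ℂ V]
    (𝒟 : DSV lam mu s t V) (hs : s = 0 ∨ s = 1 / 2)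
    (hlam : lam = 1) (q : ℤ) (hq : (q : ℂ) = mu - s)
    (ψ₁ : V →ₗ[ℂ] V)
    (hψ₁L : ∀ n : ℤ, ψ₁ (𝒟.E n) = 𝒟.Y (n - q - t))
    (hψ₁Y : ∀ n : ℤ, ψ₁ (𝒟.Y n) = 𝒟.M (n - q))
    (hψ₁M : ∀ n : ℤ, ψ₁ (𝒟.M n) = 0) :
    (∀ x : V, ⁅ψ₁ x, x⁆ = 0) ∧
    ¬ ∃ (α : ℂ) (f : V →ₗ[ℂ] V),
        (∀ x : V, f x ∈ LieAlgebra.center ℂ V) ∧ ∀ x : V, ψ₁ x = α • x + f x := by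
  have hYM : ∀ n m : ℤ, ⁅𝒟.Y n, 𝒟.M m⁆ = 0 := by
    intro n m
    rw [← lie_skew, 𝒟.bracket_MY, neg_zero]
  have hYE : ∀ n m : ℤ,
      ⁅𝒟.Y n, 𝒟.E m⁆ = -(((n : ℂ) + s - ((lam + 1) / 2) * m + mu)) • 𝒟.Y (m + n) := by
    intro n m
    rw [← lie_skew, 𝒟.bracket_EY, neg_smul]
  have hME : ∀ n m : ℤ,
      ⁅𝒟.M n, 𝒟.E m⁆ = -(((n : ℂ) - lam * m + 2 * mu)) • 𝒟.M (m + n) := by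
    intro n m
    rw [← lie_skew, 𝒟.bracket_EM, neg_smul]
  letI : LieRing (Module.End ℂ V) := LieRing.ofAssociativeRing
  set B : V →ₗ[ℂ] V →ₗ[ℂ] V := (LieAlgebra.ad ℂ V).toLinearMap ∘ₗ ψ₁
    with hBdef
  have hBapp : ∀ x y : V, B x y = ⁅ψ₁ x, y⁆ := fun x y => rfl
  have key : ∀ x y : V, ⁅ψ₁ x, y⁆ + ⁅ψ₁ y, x⁆ = 0 := by
    have hB : B + B.flip = 0 := by
      apply 𝒟.basis.ext
      intro i
      apply 𝒟.basis.ext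
      intro j
      have expand : ∀ a b : V, (B + B.flip) a b = ⁅ψ₁ a, b⁆ + ⁅ψ₁ b, a⁆ := fun a b => rfl
      rw [expand]
      have hz : ((0 : V →ₗ[ℂ] V →ₗ[ℂ] V)) (𝒟.basis i) (𝒟.basis j) = 0 := rfl
      rw [hz]
      rcases i with n | n | n <;> rcases j with m | m | m <;>
        simp only [𝒟.basis_inl, 𝒟.basis_inr_inl, 𝒟.basis_inr_inr, hψ₁L, hψ₁Y, hψ₁M,
          lie_zero, zero_lie, add_zero, zero_add, hYM, hYE, hME,
          𝒟.bracket_EE, 𝒟.bracket_EM, 𝒟.bracket_EY, 𝒟.bracket_YY, 𝒟.bracket_MM, 𝒟.bracket_MY]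
      · -- E E
        have hidx : m + (n - q - t) = n + (m - q - t) := by ring
        rw [hidx, ← add_smul]
        convert zero_smul ℂ _
        push_cast
        rw [hlam, hq, 𝒟.ht]
        ring
      · -- E Y
        have hidx : (n - q - t) + m + t = n + (m - q) := by ring
        rw [hidx, ← add_smul]
        convert zero_smul ℂ _
        push_cast
        rw [hlam, hq, 𝒟.ht]
        ring
      · -- Y E
        have hidx : (m - q - t) + n + t = m + (n - q) := by ring
        rw [hidx, ← add_smul]
        convert zero_smul ℂ _
        push_cast
        rw [hlam, hq, 𝒟.ht]
        ring
    intro x y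
    have := LinearMap.congr_fun (LinearMap.congr_fun hB x) y
    simpa [hBapp] using this
  constructor
  · intro x
    have h := key x x
    have h2 : (2 : ℂ) • ⁅ψ₁ x, x⁆ = 0 := by rw [two_smul]; exact h
    have := smul_eq_zero.mp h2
    rcases this with h' | h'
    · exact absurd h' two_ne_zero
    · exact h'
  · rintro ⟨α, f, hf, hform⟩
    have h0 : f (𝒟.E 0) = 𝒟.Y (0 - q - t) - α • 𝒟.E 0 := by
      have := hform (𝒟.E 0)
      rw [hψ₁L 0] at this
      rw [this]
      abel
    have hz : ⁅𝒟.E 1, f (𝒟.E 0)⁆ = 0 :=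
      (LieModule.mem_maxTrivSubmodule ℂ V V (f (𝒟.E 0))).mp (hf (𝒟.E 0)) (𝒟.E 1)
    rw [h0, lie_sub, lie_smul, 𝒟.bracket_EY, 𝒟.bracket_EE] at hz
    have hc1 : ((((0 : ℤ) - q - t : ℤ) : ℂ) + s - ((lam + 1) / 2) * (1 : ℤ) + mu) = -1 := by
      push_cast
      rw [hlam, hq, 𝒟.ht]
      ring
    have hc2 : (((0 : ℤ) : ℂ) - ((1 : ℤ) : ℂ)) = -1 := by norm_num
    rw [hc1, hc2] at hz
    have hz' : 𝒟.Y (1 + (0 - q - t)) = α • 𝒟.E (1 + 0) := by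
      linear_combination (norm := module) -hz
    have hα : α = 0 := by
      have hr := congrArg (fun v => 𝒟.basis.repr v (Sum.inl (1 + 0))) hz'
      rw [← 𝒟.basis_inr_inr, ← 𝒟.basis_inl] at hr
      simpa [Module.Basis.repr_self, Finsupp.single_apply] using hr.symm
    rw [hα, zero_smul] at hz'
    have : 𝒟.basis (Sum.inr (Sum.inr (1 + (0 - q - t)))) = 0 := by
      rw [𝒟.basis_inr_inr]; exact hz'
    exact 𝒟.basis.ne_zero _ this
end

section
/- Fix λ, μ ∈ ℂ and s ∈ {0, 1/2}. Let ψ be a linear commuting map on the deformative Schrödinger–Virasoro Lie algebra 𝓛 = 𝓛(λ,μ,s). Then: (i) if λ = 1 and μ − s − 1/2 ∈ ℤ, there exist α, β ∈ ℂ with ψ(x) = αx + β·ψ₀(x) for all x ∈ 𝓛; (ii) if λ = 1 and μ − s ∈ ℤ, there exist α, β, γ ∈ ℂ with ψ(x) = αx + β·ψ₀(x) + γ·ψ₁(x) for all x ∈ 𝓛; (iii) if λ = 0 and 2μ ∈ ℤ, there exist α ∈ ℂ and a linear function f : 𝓛 → ℂ with ψ(x) = αx + f(x)·M_{−2μ}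 for all x ∈ 𝓛; (iv) in all other cases, there exists α ∈ ℂ with ψ(x) = αx for all x ∈ 𝓛. -/
namespace DSV

abbrev iE (n : ℤ) : ℤ ⊕ ℤ ⊕ ℤ := Sum.inl n
abbrev iM (n : ℤ) : ℤ ⊕ ℤ ⊕ ℤ := Sum.inr (Sum.inl n)
abbrev iY (n : ℤ) : ℤ ⊕ ℤ ⊕ ℤ := Sum.inr (Sum.inr n)

variable {lam mu s : ℂ} {t : ℤ} {V : Type*} [LieRing V] [LieAlgebra ℂ V]
variable (𝒟 : DSV lam mu s t V)

noncomputable def coeff (i : ℤ ⊕ ℤ ⊕ ℤ) : V →ₗ[ℂ] ℂ :=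
  Finsupp.lapply i ∘ₗ 𝒟.basis.repr.toLinearMap

@[simp] lemma coeff_apply (i : ℤ ⊕ ℤ ⊕ ℤ) (x : V) :
    𝒟.coeff i x = 𝒟.basis.repr x i := rfl

lemma repr_E (k : ℤ) : 𝒟.basis.repr (𝒟.E k) = Finsupp.single (iE k) 1 := by
  rw [← 𝒟.basis_inl]; exact 𝒟.basis.repr_self _

lemma repr_M (k : ℤ) : 𝒟.basis.repr (𝒟.M k) = Finsupp.single (iM k) 1 := by
  rw [← 𝒟.basis_inr_inl]; exact 𝒟.basis.repr_self _

lemma repr_Y (k : ℤ) : 𝒟.basis.repr (𝒟.Y k) = Finsupp.single (iY k) 1 := by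
  rw [← 𝒟.basis_inr_inr]; exact 𝒟.basis.repr_self _

lemma brE_E (m n : ℤ) (x : V) :
    𝒟.basis.repr ⁅𝒟.E m, x⁆ (iE n) = ((n : ℂ) - 2*m) * 𝒟.basis.repr x (iE (n-m)) := by
  have h : (𝒟.coeff (iE n)) ∘ₗ (LieAlgebra.ad ℂ V (𝒟.E m) : V →ₗ[ℂ] V)
      = ((n : ℂ) - 2*m) • 𝒟.coeff (iE (n-m)) := by
    apply 𝒟.basis.ext
    rintro (k | k | k) <;>
      simp only [LinearMap.comp_apply, LieAlgebra.ad_apply, LinearMap.smul_apply,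
        𝒟.basis_inl, 𝒟.basis_inr_inl, 𝒟.basis_inr_inr, coeff_apply,
        𝒟.bracket_EE, 𝒟.bracket_EM, 𝒟.bracket_EY, map_smul, 𝒟.repr_E, 𝒟.repr_M, 𝒟.repr_Y,
        Finsupp.smul_apply, Finsupp.single_apply, smul_eq_mul]
    · split_ifs with h1 h2 h2
      · simp only [iE, Sum.inl.injEq] at h1 h2; push_cast [show k = n - m by omega]; ring
      · simp only [iE, Sum.inl.injEq] at h1 h2; omega
      · simp only [iE, Sum.inl.injEq] at h1 h2; omega
      · ring
    · simp
    · simp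
  simpa using LinearMap.congr_fun h x

lemma brE_M (m n : ℤ) (x : V) :
    𝒟.basis.repr ⁅𝒟.E m, x⁆ (iM n) = ((n : ℂ) - m - lam*m + 2*mu) * 𝒟.basis.repr x (iM (n-m)) := by
  have h : (𝒟.coeff (iM n)) ∘ₗ (LieAlgebra.ad ℂ V (𝒟.E m) : V →ₗ[ℂ] V)
      = ((n : ℂ) - m - lam*m + 2*mu) • 𝒟.coeff (iM (n-m)) := by
    apply 𝒟.basis.ext
    rintro (k | k | k) <;>
      simp only [LinearMap.comp_apply, LieAlgebra.ad_apply, LinearMap.smul_apply,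
        𝒟.basis_inl, 𝒟.basis_inr_inl, 𝒟.basis_inr_inr, coeff_apply,
        𝒟.bracket_EE, 𝒟.bracket_EM, 𝒟.bracket_EY, map_smul, 𝒟.repr_E, 𝒟.repr_M, 𝒟.repr_Y,
        Finsupp.smul_apply, Finsupp.single_apply, smul_eq_mul]
    · simp
    · split_ifs with h1 h2 h2
      · simp only [iM, Sum.inr.injEq, Sum.inl.injEq] at h1 h2
        push_cast [show k = n - m by omega]; ring
      · simp only [iM, Sum.inr.injEq, Sum.inl.injEq] at h1 h2; omega
      · simp only [iM, Sum.inr.injEq, Sum.inl.injEq] at h1 h2; omega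
      · ring
    · simp
  simpa using LinearMap.congr_fun h x

lemma brE_Y (m n : ℤ) (x : V) :
    𝒟.basis.repr ⁅𝒟.E m, x⁆ (iY n)
      = ((n : ℂ) - m + s - ((lam+1)/2)*m + mu) * 𝒟.basis.repr x (iY (n-m)) := by
  have h : (𝒟.coeff (iY n)) ∘ₗ (LieAlgebra.ad ℂ V (𝒟.E m) : V →ₗ[ℂ] V)
      = ((n : ℂ) - m + s - ((lam+1)/2)*m + mu) • 𝒟.coeff (iY (n-m)) := by
    apply 𝒟.basis.ext
    rintro (k | k | k) <;>
      simp only [LinearMap.comp_apply, LieAlgebra.ad_apply, LinearMap.smul_apply,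
        𝒟.basis_inl, 𝒟.basis_inr_inl, 𝒟.basis_inr_inr, coeff_apply,
        𝒟.bracket_EE, 𝒟.bracket_EM, 𝒟.bracket_EY, map_smul, 𝒟.repr_E, 𝒟.repr_M, 𝒟.repr_Y,
        Finsupp.smul_apply, Finsupp.single_apply, smul_eq_mul]
    · simp
    · simp
    · split_ifs with h1 h2 h2
      · simp only [iY, Sum.inr.injEq] at h1 h2
        push_cast [show k = n - m by omega]; ring
      · simp only [iY, Sum.inr.injEq] at h1 h2; omega
      · simp only [iY, Sum.inr.injEq] at h1 h2; omega
      · ring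
  simpa using LinearMap.congr_fun h x

lemma brM_E (m n : ℤ) (x : V) :
    𝒟.basis.repr ⁅𝒟.M m, x⁆ (iE n) = 0 := by
  have h : (𝒟.coeff (iE n)) ∘ₗ (LieAlgebra.ad ℂ V (𝒟.M m) : V →ₗ[ℂ] V) = 0 := by
    apply 𝒟.basis.ext
    rintro (k | k | k) <;>
      simp only [LinearMap.comp_apply, LieAlgebra.ad_apply, LinearMap.zero_apply,
        𝒟.basis_inl, 𝒟.basis_inr_inl, 𝒟.basis_inr_inr, coeff_apply]
    · rw [← lie_skew, 𝒟.bracket_EM]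
      simp [𝒟.repr_M, Finsupp.single_apply]
    · simp [𝒟.bracket_MM]
    · simp [𝒟.bracket_MY]
  simpa using LinearMap.congr_fun h x

lemma brM_M (m n : ℤ) (x : V) :
    𝒟.basis.repr ⁅𝒟.M m, x⁆ (iM n)
      = -((m:ℂ) - lam*((n:ℂ)-m) + 2*mu) * 𝒟.basis.repr x (iE (n-m)) := by
  have h : (𝒟.coeff (iM n)) ∘ₗ (LieAlgebra.ad ℂ V (𝒟.M m) : V →ₗ[ℂ] V)
      = (-((m:ℂ) - lam*((n:ℂ)-m) + 2*mu)) • 𝒟.coeff (iE (n-m)) := by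
    apply 𝒟.basis.ext
    rintro (k | k | k) <;>
      simp only [LinearMap.comp_apply, LieAlgebra.ad_apply, LinearMap.smul_apply,
        𝒟.basis_inl, 𝒟.basis_inr_inl, 𝒟.basis_inr_inr, coeff_apply, smul_eq_mul]
    · rw [← lie_skew, 𝒟.bracket_EM]
      simp only [map_neg, map_smul, 𝒟.repr_M, 𝒟.repr_E, Finsupp.neg_apply,
        Finsupp.smul_apply, Finsupp.single_apply, smul_eq_mul]
      split_ifs with h1 h2 h2
      · simp only [iM, iE, Sum.inr.injEq, Sum.inl.injEq] at h1 h2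
        push_cast [show k = n - m by omega]; ring
      · simp only [iM, iE, Sum.inr.injEq, Sum.inl.injEq] at h1 h2; omega
      · simp only [iM, iE, Sum.inr.injEq, Sum.inl.injEq] at h1 h2; omega
      · ring
    · simp [𝒟.bracket_MM, 𝒟.repr_M, Finsupp.single_apply]
    · simp [𝒟.bracket_MY, 𝒟.repr_Y, Finsupp.single_apply]
  simpa using LinearMap.congr_fun h x

lemma brM_Y (m n : ℤ) (x : V) :
    𝒟.basis.repr ⁅𝒟.M m, x⁆ (iY n) = 0 := by
  have h : (𝒟.coeff (iY n)) ∘ₗ (LieAlgebra.ad ℂ V (𝒟.M m) : V →ₗ[ℂ] V) = 0 := by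
    apply 𝒟.basis.ext
    rintro (k | k | k) <;>
      simp only [LinearMap.comp_apply, LieAlgebra.ad_apply, LinearMap.zero_apply,
        𝒟.basis_inl, 𝒟.basis_inr_inl, 𝒟.basis_inr_inr, coeff_apply]
    · rw [← lie_skew, 𝒟.bracket_EM]
      simp [𝒟.repr_M, Finsupp.single_apply]
    · simp [𝒟.bracket_MM]
    · simp [𝒟.bracket_MY]
  simpa using LinearMap.congr_fun h x

lemma brY_E (m n : ℤ) (x : V) :
    𝒟.basis.repr ⁅𝒟.Y m, x⁆ (iE n) = 0 := by
  have h : (𝒟.coeff (iE n)) ∘ₗ (LieAlgebra.ad ℂ V (𝒟.Y m) : V →ₗ[ℂ] V) = 0 := by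
    apply 𝒟.basis.ext
    rintro (k | k | k) <;>
      simp only [LinearMap.comp_apply, LieAlgebra.ad_apply, LinearMap.zero_apply,
        𝒟.basis_inl, 𝒟.basis_inr_inl, 𝒟.basis_inr_inr, coeff_apply]
    · rw [← lie_skew, 𝒟.bracket_EY]
      simp [𝒟.repr_Y, Finsupp.single_apply]
    · rw [← lie_skew, 𝒟.bracket_MY]
      simp
    · simp [𝒟.bracket_YY, 𝒟.repr_M, Finsupp.single_apply]
  simpa using LinearMap.congr_fun h x

lemma brY_M (m n : ℤ) (x : V) :
    𝒟.basis.repr ⁅𝒟.Y m, x⁆ (iM n) = ((n:ℂ) - 2*m - t) * 𝒟.basis.repr x (iY (n-m-t)) := by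
  have h : (𝒟.coeff (iM n)) ∘ₗ (LieAlgebra.ad ℂ V (𝒟.Y m) : V →ₗ[ℂ] V)
      = ((n:ℂ) - 2*m - t) • 𝒟.coeff (iY (n-m-t)) := by
    apply 𝒟.basis.ext
    rintro (k | k | k) <;>
      simp only [LinearMap.comp_apply, LieAlgebra.ad_apply, LinearMap.smul_apply,
        𝒟.basis_inl, 𝒟.basis_inr_inl, 𝒟.basis_inr_inr, coeff_apply, smul_eq_mul]
    · rw [← lie_skew, 𝒟.bracket_EY]
      simp [𝒟.repr_Y, 𝒟.repr_E, Finsupp.single_apply]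
    · rw [← lie_skew, 𝒟.bracket_MY]
      simp [𝒟.repr_M, Finsupp.single_apply]
    · rw [𝒟.bracket_YY]
      simp only [map_smul, 𝒟.repr_M, 𝒟.repr_Y, Finsupp.smul_apply, Finsupp.single_apply,
        smul_eq_mul]
      split_ifs with h1 h2 h2
      · simp only [iM, iY, Sum.inr.injEq, Sum.inl.injEq] at h1 h2
        push_cast [show k = n - m - t by omega]; ring
      · simp only [iM, iY, Sum.inr.injEq, Sum.inl.injEq] at h1 h2; omega
      · simp only [iM, iY, Sum.inr.injEq, Sum.inl.injEq] at h1 h2; omega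
      · ring
  simpa using LinearMap.congr_fun h x

lemma brY_Y (m n : ℤ) (x : V) :
    𝒟.basis.repr ⁅𝒟.Y m, x⁆ (iY n)
      = -((m:ℂ) + s - ((lam+1)/2)*((n:ℂ)-m) + mu) * 𝒟.basis.repr x (iE (n-m)) := by
  have h : (𝒟.coeff (iY n)) ∘ₗ (LieAlgebra.ad ℂ V (𝒟.Y m) : V →ₗ[ℂ] V)
      = (-((m:ℂ) + s - ((lam+1)/2)*((n:ℂ)-m) + mu)) • 𝒟.coeff (iE (n-m)) := by
    apply 𝒟.basis.ext
    rintro (k | k | k) <;>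
      simp only [LinearMap.comp_apply, LieAlgebra.ad_apply, LinearMap.smul_apply,
        𝒟.basis_inl, 𝒟.basis_inr_inl, 𝒟.basis_inr_inr, coeff_apply, smul_eq_mul]
    · rw [← lie_skew, 𝒟.bracket_EY]
      simp only [map_neg, map_smul, 𝒟.repr_Y, 𝒟.repr_E, Finsupp.neg_apply,
        Finsupp.smul_apply, Finsupp.single_apply, smul_eq_mul]
      split_ifs with h1 h2 h2
      · simp only [iY, iE, Sum.inr.injEq, Sum.inl.injEq] at h1 h2
        push_cast [show k = n - m by omega]; ring
      · simp only [iY, iE, Sum.inr.injEq, Sum.inl.injEq] at h1 h2; omega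
      · simp only [iY, iE, Sum.inr.injEq, Sum.inl.injEq] at h1 h2; omega
      · ring
    · rw [← lie_skew, 𝒟.bracket_MY]
      simp [𝒟.repr_M, Finsupp.single_apply]
    · simp [𝒟.bracket_YY, 𝒟.repr_M, 𝒟.repr_Y, Finsupp.single_apply]
  simpa using LinearMap.congr_fun h x
end DSV

namespace DSV
variable {lam mu s : ℂ} {t : ℤ} {V : Type*} [LieRing V] [LieAlgebra ℂ V] (𝒟 : DSV lam mu s t V)
section Psi
variable (ψ : V →ₗ[ℂ] V)

lemma hsym (hcomm : ∀ x : V, ⁅ψ x, x⁆ = 0) (x y : V) : ⁅x, ψ y⁆ = -⁅y, ψ x⁆ := by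
  have h := hcomm (x + y)
  rw [map_add, add_lie, lie_add, lie_add, hcomm x, hcomm y] at h
  have h2 : ⁅ψ x, y⁆ + ⁅ψ y, x⁆ = 0 := by
    rw [← h]; abel
  rw [← lie_skew x (ψ y), ← lie_skew y (ψ x), neg_neg]
  exact (eq_neg_of_add_eq_zero_left h2).symm


lemma selfcomm (hcomm : ∀ x : V, ⁅ψ x, x⁆ = 0) (x : V) : ⁅x, ψ x⁆ = 0 := by
  rw [← lie_skew, hcomm x, neg_zero]

-- diagonal equations
lemma diagE_E (hcomm : ∀ x : V, ⁅ψ x, x⁆ = 0) (k n : ℤ) :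
    ((n : ℂ) - 2*k) * 𝒟.basis.repr (ψ (𝒟.E k)) (iE (n-k)) = 0 := by
  have h : 𝒟.basis.repr ⁅𝒟.E k, ψ (𝒟.E k)⁆ (iE n) = 0 := by
    rw [selfcomm ψ hcomm]; simp
  rwa [𝒟.brE_E] at h

lemma diagE_M (hcomm : ∀ x : V, ⁅ψ x, x⁆ = 0) (k n : ℤ) :
    ((n : ℂ) - k - lam*k + 2*mu) * 𝒟.basis.repr (ψ (𝒟.E k)) (iM (n-k)) = 0 := by
  have h : 𝒟.basis.repr ⁅𝒟.E k, ψ (𝒟.E k)⁆ (iM n) = 0 := by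
    rw [selfcomm ψ hcomm]; simp
  rwa [𝒟.brE_M] at h

lemma diagE_Y (hcomm : ∀ x : V, ⁅ψ x, x⁆ = 0) (k n : ℤ) :
    ((n : ℂ) - k + s - ((lam+1)/2)*k + mu) * 𝒟.basis.repr (ψ (𝒟.E k)) (iY (n-k)) = 0 := by
  have h : 𝒟.basis.repr ⁅𝒟.E k, ψ (𝒟.E k)⁆ (iY n) = 0 := by
    rw [selfcomm ψ hcomm]; simp
  rwa [𝒟.brE_Y] at h

lemma diagY_M (hcomm : ∀ x : V, ⁅ψ x, x⁆ = 0) (k n : ℤ) :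
    ((n : ℂ) - 2*k - t) * 𝒟.basis.repr (ψ (𝒟.Y k)) (iY (n-k-t)) = 0 := by
  have h : 𝒟.basis.repr ⁅𝒟.Y k, ψ (𝒟.Y k)⁆ (iM n) = 0 := by
    rw [selfcomm ψ hcomm]; simp
  rwa [𝒟.brY_M] at h

-- cross equations
lemma eqEE_E (hcomm : ∀ x : V, ⁅ψ x, x⁆ = 0) (k m n : ℤ) :
    ((n : ℂ) - 2*k) * 𝒟.basis.repr (ψ (𝒟.E m)) (iE (n-k))
      = -(((n : ℂ) - 2*m) * 𝒟.basis.repr (ψ (𝒟.E k)) (iE (n-m))) := by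
  have h : 𝒟.basis.repr ⁅𝒟.E k, ψ (𝒟.E m)⁆ (iE n)
      = 𝒟.basis.repr (-⁅𝒟.E m, ψ (𝒟.E k)⁆) (iE n) := by
    rw [hsym ψ hcomm]
  rwa [map_neg, Finsupp.neg_apply, 𝒟.brE_E, 𝒟.brE_E] at h

lemma eqEE_M (hcomm : ∀ x : V, ⁅ψ x, x⁆ = 0) (k m n : ℤ) :
    ((n : ℂ) - k - lam*k + 2*mu) * 𝒟.basis.repr (ψ (𝒟.E m)) (iM (n-k))
      = -(((n : ℂ) - m - lam*m + 2*mu) * 𝒟.basis.repr (ψ (𝒟.E k)) (iM (n-m))) := by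
  have h : 𝒟.basis.repr ⁅𝒟.E k, ψ (𝒟.E m)⁆ (iM n)
      = 𝒟.basis.repr (-⁅𝒟.E m, ψ (𝒟.E k)⁆) (iM n) := by
    rw [hsym ψ hcomm]
  rwa [map_neg, Finsupp.neg_apply, 𝒟.brE_M, 𝒟.brE_M] at h

lemma eqEE_Y (hcomm : ∀ x : V, ⁅ψ x, x⁆ = 0) (k m n : ℤ) :
    ((n : ℂ) - k + s - ((lam+1)/2)*k + mu) * 𝒟.basis.repr (ψ (𝒟.E m)) (iY (n-k))
      = -(((n : ℂ) - m + s - ((lam+1)/2)*m + mu) * 𝒟.basis.repr (ψ (𝒟.E k)) (iY (n-m))) := by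
  have h : 𝒟.basis.repr ⁅𝒟.E k, ψ (𝒟.E m)⁆ (iY n)
      = 𝒟.basis.repr (-⁅𝒟.E m, ψ (𝒟.E k)⁆) (iY n) := by
    rw [hsym ψ hcomm]
  rwa [map_neg, Finsupp.neg_apply, 𝒟.brE_Y, 𝒟.brE_Y] at h

lemma eqEM_E (hcomm : ∀ x : V, ⁅ψ x, x⁆ = 0) (k m n : ℤ) :
    (0 : ℂ) = -(((n : ℂ) - 2*k) * 𝒟.basis.repr (ψ (𝒟.M m)) (iE (n-k))) := by
  have h : 𝒟.basis.repr ⁅𝒟.M m, ψ (𝒟.E k)⁆ (iE n)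
      = 𝒟.basis.repr (-⁅𝒟.E k, ψ (𝒟.M m)⁆) (iE n) := by
    rw [hsym ψ hcomm]
  rwa [map_neg, Finsupp.neg_apply, 𝒟.brM_E, 𝒟.brE_E] at h

lemma eqEM_M (hcomm : ∀ x : V, ⁅ψ x, x⁆ = 0) (k m n : ℤ) :
    -((m : ℂ) - lam*((n : ℂ)-m) + 2*mu) * 𝒟.basis.repr (ψ (𝒟.E k)) (iE (n-m))
      = -(((n : ℂ) - k - lam*k + 2*mu) * 𝒟.basis.repr (ψ (𝒟.M m)) (iM (n-k))) := by
  have h : 𝒟.basis.repr ⁅𝒟.M m, ψ (𝒟.E k)⁆ (iM n)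
      = 𝒟.basis.repr (-⁅𝒟.E k, ψ (𝒟.M m)⁆) (iM n) := by
    rw [hsym ψ hcomm]
  rwa [map_neg, Finsupp.neg_apply, 𝒟.brM_M, 𝒟.brE_M] at h

lemma eqEM_Y (hcomm : ∀ x : V, ⁅ψ x, x⁆ = 0) (k m n : ℤ) :
    (0 : ℂ) = -(((n : ℂ) - k + s - ((lam+1)/2)*k + mu) * 𝒟.basis.repr (ψ (𝒟.M m)) (iY (n-k))) := by
  have h : 𝒟.basis.repr ⁅𝒟.M m, ψ (𝒟.E k)⁆ (iY n)
      = 𝒟.basis.repr (-⁅𝒟.E k, ψ (𝒟.M m)⁆) (iY n) := by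
    rw [hsym ψ hcomm]
  rwa [map_neg, Finsupp.neg_apply, 𝒟.brM_Y, 𝒟.brE_Y] at h

lemma eqEY_E (hcomm : ∀ x : V, ⁅ψ x, x⁆ = 0) (k m n : ℤ) :
    (0 : ℂ) = -(((n : ℂ) - 2*k) * 𝒟.basis.repr (ψ (𝒟.Y m)) (iE (n-k))) := by
  have h : 𝒟.basis.repr ⁅𝒟.Y m, ψ (𝒟.E k)⁆ (iE n)
      = 𝒟.basis.repr (-⁅𝒟.E k, ψ (𝒟.Y m)⁆) (iE n) := by
    rw [hsym ψ hcomm]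
  rwa [map_neg, Finsupp.neg_apply, 𝒟.brY_E, 𝒟.brE_E] at h

lemma eqEY_M (hcomm : ∀ x : V, ⁅ψ x, x⁆ = 0) (k m n : ℤ) :
    ((n : ℂ) - 2*m - t) * 𝒟.basis.repr (ψ (𝒟.E k)) (iY (n-m-t))
      = -(((n : ℂ) - k - lam*k + 2*mu) * 𝒟.basis.repr (ψ (𝒟.Y m)) (iM (n-k))) := by
  have h : 𝒟.basis.repr ⁅𝒟.Y m, ψ (𝒟.E k)⁆ (iM n)
      = 𝒟.basis.repr (-⁅𝒟.E k, ψ (𝒟.Y m)⁆) (iM n) := by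
    rw [hsym ψ hcomm]
  rwa [map_neg, Finsupp.neg_apply, 𝒟.brY_M, 𝒟.brE_M] at h

lemma eqEY_Y (hcomm : ∀ x : V, ⁅ψ x, x⁆ = 0) (k m n : ℤ) :
    -((m : ℂ) + s - ((lam+1)/2)*((n : ℂ)-m) + mu) * 𝒟.basis.repr (ψ (𝒟.E k)) (iE (n-m))
      = -(((n : ℂ) - k + s - ((lam+1)/2)*k + mu) * 𝒟.basis.repr (ψ (𝒟.Y m)) (iY (n-k))) := by
  have h : 𝒟.basis.repr ⁅𝒟.Y m, ψ (𝒟.E k)⁆ (iY n)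
      = 𝒟.basis.repr (-⁅𝒟.E k, ψ (𝒟.Y m)⁆) (iY n) := by
    rw [hsym ψ hcomm]
  rwa [map_neg, Finsupp.neg_apply, 𝒟.brY_Y, 𝒟.brE_Y] at h

lemma eqMY_M (hcomm : ∀ x : V, ⁅ψ x, x⁆ = 0) (k m n : ℤ) :
    ((n : ℂ) - 2*m - t) * 𝒟.basis.repr (ψ (𝒟.M k)) (iY (n-m-t))
      = -(-((k : ℂ) - lam*((n : ℂ)-k) + 2*mu) * 𝒟.basis.repr (ψ (𝒟.Y m)) (iE (n-k))) := by
  have h : 𝒟.basis.repr ⁅𝒟.Y m, ψ (𝒟.M k)⁆ (iM n)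
      = 𝒟.basis.repr (-⁅𝒟.M k, ψ (𝒟.Y m)⁆) (iM n) := by
    rw [hsym ψ hcomm]
  rwa [map_neg, Finsupp.neg_apply, 𝒟.brY_M, 𝒟.brM_M] at h

lemma eqYY_M (hcomm : ∀ x : V, ⁅ψ x, x⁆ = 0) (k m n : ℤ) :
    ((n : ℂ) - 2*m - t) * 𝒟.basis.repr (ψ (𝒟.Y k)) (iY (n-m-t))
      = -(((n : ℂ) - 2*k - t) * 𝒟.basis.repr (ψ (𝒟.Y m)) (iY (n-k-t))) := by
  have h : 𝒟.basis.repr ⁅𝒟.Y m, ψ (𝒟.Y k)⁆ (iM n)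
      = 𝒟.basis.repr (-⁅𝒟.Y k, ψ (𝒟.Y m)⁆) (iM n) := by
    rw [hsym ψ hcomm]
  rwa [map_neg, Finsupp.neg_apply, 𝒟.brY_M, 𝒟.brY_M] at h

end Psi
end DSV

namespace DSV
variable {lam mu s : ℂ} {t : ℤ} {V : Type*} [LieRing V] [LieAlgebra ℂ V] (𝒟 : DSV lam mu s t V)
variable (ψ : V →ₗ[ℂ] V)

noncomputable def alpha : ℂ := 𝒟.basis.repr (ψ (𝒟.E 0)) (iE 0)

lemma intc {a b : ℤ} (h : (a:ℂ) = b) : a = b := by exact_mod_cast h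

lemma solA (hcomm : ∀ x : V, ⁅ψ x, x⁆ = 0) (k n : ℤ) :
    𝒟.basis.repr (ψ (𝒟.E k)) (iE n) = if n = k then alpha 𝒟 ψ else 0 := by
  have off : ∀ k n : ℤ, n ≠ k → 𝒟.basis.repr (ψ (𝒟.E k)) (iE n) = 0 := by
    intro k n hn
    have h := diagE_E 𝒟 ψ hcomm k (n+k)
    have hi : n + k - k = n := by omega
    rw [hi] at h
    rcases mul_eq_zero.mp h with h'|h'
    · exfalso; apply hn; apply intc
      push_cast at h' ⊢; linear_combination h'
    · exact h'
  rcases eq_or_ne n k with rfl|hn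
  · simp only [if_pos rfl]
    rcases eq_or_ne n 0 with rfl|hk
    · rfl
    · have h := eqEE_E 𝒟 ψ hcomm 0 n n
      have hi1 : n - 0 = n := by omega
      have hi2 : n - n = 0 := by omega
      rw [hi1, hi2] at h
      have hk' : ((n:ℂ)) ≠ 0 := by
        intro hh; exact hk (by exact_mod_cast hh)
      apply mul_left_cancel₀ hk'
      unfold alpha
      push_cast at h ⊢
      linear_combination h
  · rw [if_neg hn]; exact off k n hn

lemma solD (hcomm : ∀ x : V, ⁅ψ x, x⁆ = 0) (m j : ℤ) :
    𝒟.basis.repr (ψ (𝒟.M m)) (iE j) = 0 := by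
  have h := eqEM_E 𝒟 ψ hcomm (j-1) m (2*j-1)
  have hi : 2*j-1-(j-1) = j := by omega
  rw [hi] at h
  rcases mul_eq_zero.mp (neg_eq_zero.mp h.symm) with h'|h'
  · exfalso
    have : (1:ℂ) = 0 := by push_cast at h'; linear_combination h'
    simp at this
  · exact h'

lemma solG (hcomm : ∀ x : V, ⁅ψ x, x⁆ = 0) (m j : ℤ) :
    𝒟.basis.repr (ψ (𝒟.Y m)) (iE j) = 0 := by
  have h := eqEY_E 𝒟 ψ hcomm (j-1) m (2*j-1)
  have hi : 2*j-1-(j-1) = j := by omega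
  rw [hi] at h
  rcases mul_eq_zero.mp (neg_eq_zero.mp h.symm) with h'|h'
  · exfalso
    have : (1:ℂ) = 0 := by push_cast at h'; linear_combination h'
    simp at this
  · exact h'

lemma solF (hcomm : ∀ x : V, ⁅ψ x, x⁆ = 0) (k j : ℤ) :
    𝒟.basis.repr (ψ (𝒟.M k)) (iY j) = 0 := by
  have h := eqMY_M 𝒟 ψ hcomm k (j-1) (j + (j-1) + t)
  have hi : j + (j-1) + t - (j-1) - t = j := by omega
  rw [hi, solG 𝒟 ψ hcomm (j-1) (j + (j-1) + t - k), mul_zero, neg_zero] at h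
  rcases mul_eq_zero.mp h with h'|h'
  · exfalso
    have : (1:ℂ) = 0 := by push_cast at h'; linear_combination h'
    simp at this
  · exact h'

lemma solL (hcomm : ∀ x : V, ⁅ψ x, x⁆ = 0) (m n : ℤ) :
    𝒟.basis.repr (ψ (𝒟.Y m)) (iY n) = if n = m then alpha 𝒟 ψ else 0 := by
  have off : ∀ k j : ℤ, j ≠ k → 𝒟.basis.repr (ψ (𝒟.Y k)) (iY j) = 0 := by
    intro k j hj
    have h := diagY_M 𝒟 ψ hcomm k (j+k+t)
    have hi : j + k + t - k - t = j := by omega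
    rw [hi] at h
    rcases mul_eq_zero.mp h with h'|h'
    · exfalso; apply hj; apply intc
      push_cast at h' ⊢; linear_combination h'
    · exact h'
  have key : ∀ m k : ℤ, ((m:ℂ) + s - ((lam+1)/2)*k + mu)
      * (𝒟.basis.repr (ψ (𝒟.Y m)) (iY m) - alpha 𝒟 ψ) = 0 := by
    intro m k
    have h := eqEY_Y 𝒟 ψ hcomm k m (m+k)
    have hi1 : m + k - m = k := by omega
    have hi2 : m + k - k = m := by omega
    rw [hi1, hi2, solA 𝒟 ψ hcomm k k, if_pos rfl] at h
    push_cast at h ⊢; linear_combination h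
  have const : ∀ k m : ℤ, k ≠ m →
      𝒟.basis.repr (ψ (𝒟.Y k)) (iY k) = 𝒟.basis.repr (ψ (𝒟.Y m)) (iY m) := by
    intro k m hkm
    have h := eqYY_M 𝒟 ψ hcomm k m (k+m+t)
    have hi1 : k + m + t - m - t = k := by omega
    have hi2 : k + m + t - k - t = m := by omega
    rw [hi1, hi2] at h
    have hc : ((k:ℂ)) - m ≠ 0 := by
      simpa [sub_eq_zero] using fun hh => hkm (intc hh)
    apply mul_left_cancel₀ hc
    push_cast at h ⊢; linear_combination h
  have diag : ∀ m : ℤ, 𝒟.basis.repr (ψ (𝒟.Y m)) (iY m) = alpha 𝒟 ψ := by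
    intro m
    have h0 := key 0 0
    have h1 := key 1 0
    rw [const 1 0 (by omega)] at h1
    have hX : 𝒟.basis.repr (ψ (𝒟.Y 0)) (iY 0) - alpha 𝒟 ψ = 0 := by
      push_cast at h0 h1; linear_combination h1 - h0
    rcases eq_or_ne m 0 with rfl|hm
    · linear_combination hX
    · rw [const m 0 hm]; linear_combination hX
  rcases eq_or_ne n m with rfl|hn
  · rw [if_pos rfl]; exact diag n
  · rw [if_neg hn]; exact off m n hn

end DSV

namespace DSV
variable {lam mu s : ℂ} {t : ℤ} {V : Type*} [LieRing V] [LieAlgebra ℂ V] (𝒟 : DSV lam mu s t V)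
variable (ψ : V →ₗ[ℂ] V)

/-- support equation for B (M-components of ψ(E k)) -/
lemma eqB (hcomm : ∀ x : V, ⁅ψ x, x⁆ = 0) (k j : ℤ) :
    ((j:ℂ) - lam*k + 2*mu) * 𝒟.basis.repr (ψ (𝒟.E k)) (iM j) = 0 := by
  have h := diagE_M 𝒟 ψ hcomm k (j+k)
  have hi : j + k - k = j := by omega
  rw [hi] at h
  have hc : ((j:ℂ)+(k:ℂ) - k - lam*k + 2*mu) = ((j:ℂ) - lam*k + 2*mu) := by ring
  push_cast at h
  rw [hc] at h
  exact h

/-- support equation for C (Y-components of ψ(E k)) -/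
lemma eqC (hcomm : ∀ x : V, ⁅ψ x, x⁆ = 0) (k j : ℤ) :
    ((j:ℂ) + s - ((lam+1)/2)*k + mu) * 𝒟.basis.repr (ψ (𝒟.E k)) (iY j) = 0 := by
  have h := diagE_Y 𝒟 ψ hcomm k (j+k)
  have hi : j + k - k = j := by omega
  rw [hi] at h
  have hc : ((j:ℂ)+(k:ℂ) - k + s - ((lam+1)/2)*k + mu) = ((j:ℂ) + s - ((lam+1)/2)*k + mu) := by
    ring
  push_cast at h
  rw [hc] at h
  exact h

/-- cross equation for B -/
lemma Bcross (hcomm : ∀ x : V, ⁅ψ x, x⁆ = 0) (k0 j0 m : ℤ)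
    (hj0 : (j0:ℂ) = lam*k0 - 2*mu) (hm : m ≠ k0) :
    𝒟.basis.repr (ψ (𝒟.E m)) (iM (m + j0 - k0)) = lam * 𝒟.basis.repr (ψ (𝒟.E k0)) (iM j0) := by
  have h := eqEE_M 𝒟 ψ hcomm k0 m (m + j0)
  have hi1 : m + j0 - k0 = m + j0 - k0 := rfl
  have hi2 : m + j0 - m = j0 := by omega
  rw [hi2] at h
  have hmc : ((m:ℂ)) - k0 ≠ 0 := by
    intro hh; apply hm; apply intc; linear_combination hh
  apply mul_left_cancel₀ hmc
  push_cast at h ⊢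
  linear_combination h - ((𝒟.basis.repr (ψ (𝒟.E m))) (iM (m + j0 - k0)) + (𝒟.basis.repr (ψ (𝒟.E k0)) (iM j0))) * hj0

/-- cross equation for C -/
lemma Ccross (hcomm : ∀ x : V, ⁅ψ x, x⁆ = 0) (k0 j0 m : ℤ)
    (hj0 : (j0:ℂ) + s + mu = ((lam+1)/2)*k0) (hm : m ≠ k0) :
    𝒟.basis.repr (ψ (𝒟.E m)) (iY (m + j0 - k0))
      = ((lam+1)/2) * 𝒟.basis.repr (ψ (𝒟.E k0)) (iY j0) := by
  have h := eqEE_Y 𝒟 ψ hcomm k0 m (m + j0)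
  have hi2 : m + j0 - m = j0 := by omega
  rw [hi2] at h
  have hmc : ((m:ℂ)) - k0 ≠ 0 := by
    intro hh; apply hm; apply intc; linear_combination hh
  apply mul_left_cancel₀ hmc
  push_cast at h ⊢
  linear_combination h - ((𝒟.basis.repr (ψ (𝒟.E m))) (iY (m + j0 - k0)) + (𝒟.basis.repr (ψ (𝒟.E k0)) (iY j0))) * hj0

/-- off-diagonal equation for E-components of ψ(M m) -/
lemma eqE_off (hcomm : ∀ x : V, ⁅ψ x, x⁆ = 0) (m k j : ℤ) (hj : j ≠ m) :
    ((j:ℂ) - lam*k + 2*mu) * 𝒟.basis.repr (ψ (𝒟.M m)) (iM j) = 0 := by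
  have h := eqEM_M 𝒟 ψ hcomm k m (j+k)
  have hi1 : j + k - k = j := by omega
  rw [hi1, solA 𝒟 ψ hcomm k (j+k-m), if_neg (by omega)] at h
  push_cast at h
  linear_combination h

/-- diagonal equation for M-components of ψ(M m) -/
lemma eqE_diag (hcomm : ∀ x : V, ⁅ψ x, x⁆ = 0) (m k : ℤ) :
    ((m:ℂ) - lam*k + 2*mu) * (𝒟.basis.repr (ψ (𝒟.M m)) (iM m) - alpha 𝒟 ψ) = 0 := by
  have h := eqEM_M 𝒟 ψ hcomm k m (m+k)
  have hi1 : m + k - k = m := by omega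
  have hi2 : m + k - m = k := by omega
  rw [hi1, hi2, solA 𝒟 ψ hcomm k k, if_pos rfl] at h
  push_cast at h
  linear_combination h

/-- master equation for H (M-components of ψ(Y m)) -/
lemma eqH (hcomm : ∀ x : V, ⁅ψ x, x⁆ = 0) (m k j : ℤ) :
    ((j:ℂ) - lam*k + 2*mu) * 𝒟.basis.repr (ψ (𝒟.Y m)) (iM j)
      = -(((j:ℂ) + k - 2*m - t) * 𝒟.basis.repr (ψ (𝒟.E k)) (iY (j+k-m-t))) := by
  have h := eqEY_M 𝒟 ψ hcomm k m (j+k)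
  have hi1 : j + k - m - t = j + k - m - t := rfl
  have hi2 : j + k - k = j := by omega
  rw [hi2] at h
  push_cast at h ⊢
  linear_combination h

end DSV

namespace DSV
variable {lam mu s : ℂ} {t : ℤ} {V : Type*} [LieRing V] [LieAlgebra ℂ V] (𝒟 : DSV lam mu s t V)
variable (ψ : V →ₗ[ℂ] V)

lemma solB_one (hcomm : ∀ x : V, ⁅ψ x, x⁆ = 0) (hl : lam = 1) (p : ℤ) (hp : (p:ℂ) = 2*mu)
    (k j : ℤ) :
    𝒟.basis.repr (ψ (𝒟.E k)) (iM j)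
      = if j = k - p then 𝒟.basis.repr (ψ (𝒟.E 0)) (iM (-p)) else 0 := by
  rcases eq_or_ne j (k-p) with rfl|hj
  · rw [if_pos rfl]
    rcases eq_or_ne k 0 with rfl|hk
    · rw [show (0:ℤ) - p = -p from by omega]
    · have h := Bcross 𝒟 ψ hcomm 0 (-p) k
        (by push_cast; rw [hl]; linear_combination -hp) hk
      rw [show k + -p - 0 = k - p from by omega] at h
      linear_combination h + (𝒟.basis.repr (ψ (𝒟.E 0)) (iM (-p))) * hl
  · rw [if_neg hj]
    have h := eqB 𝒟 ψ hcomm k j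
    rcases mul_eq_zero.mp h with h'|h'
    · exfalso; apply hj; apply intc
      rw [hl] at h'; push_cast
      linear_combination h' + hp
    · exact h'

lemma solC_one (hcomm : ∀ x : V, ⁅ψ x, x⁆ = 0) (hl : lam = 1) (q : ℤ) (hq : (q:ℂ) = mu - s)
    (k j : ℤ) :
    𝒟.basis.repr (ψ (𝒟.E k)) (iY j)
      = if j = k - q - t then 𝒟.basis.repr (ψ (𝒟.E 0)) (iY (-q-t)) else 0 := by
  rcases eq_or_ne j (k-q-t) with rfl|hj
  · rw [if_pos rfl]
    rcases eq_or_ne k 0 with rfl|hk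
    · rw [show (0:ℤ) - q - t = -q-t from by omega]
    · have h := Ccross 𝒟 ψ hcomm 0 (-q-t) k
        (by push_cast; rw [hl]; linear_combination -hq - 𝒟.ht) hk
      rw [show k + (-q-t) - 0 = k - q - t from by omega] at h
      linear_combination h + (𝒟.basis.repr (ψ (𝒟.E 0)) (iY (-q-t)) / 2) * hl
  · rw [if_neg hj]
    have h := eqC 𝒟 ψ hcomm k j
    rcases mul_eq_zero.mp h with h'|h'
    · exfalso; apply hj; apply intc
      rw [hl] at h'; push_cast
      linear_combination h' + hq + 𝒟.ht
    · exact h'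

lemma solH_one (hcomm : ∀ x : V, ⁅ψ x, x⁆ = 0) (hl : lam = 1) (q : ℤ) (hq : (q:ℂ) = mu - s)
    (m j : ℤ) :
    𝒟.basis.repr (ψ (𝒟.Y m)) (iM j)
      = if j = m - q then 𝒟.basis.repr (ψ (𝒟.E 0)) (iY (-q-t)) else 0 := by
  rcases eq_or_ne j (m-q) with rfl|hj
  · rw [if_pos rfl]
    have h := eqH 𝒟 ψ hcomm m (m+q+t-1) (m-q)
    rw [solC_one 𝒟 ψ hcomm hl q hq (m+q+t-1) (m-q+(m+q+t-1)-m-t),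
      if_pos (by omega)] at h
    have hc1 : ((m - q : ℤ):ℂ) - lam * ((m + q + t - 1 : ℤ):ℂ) + 2*mu = 1 := by
      rw [hl]; push_cast; linear_combination -2*hq - 𝒟.ht
    have hc2 : ((m - q : ℤ):ℂ) + ((m + q + t - 1:ℤ):ℂ) - 2*(m:ℂ) - (t:ℂ) = -1 := by
      push_cast; ring
    rw [hc1, hc2] at h
    simpa using h
  · rw [if_neg hj]
    have h := eqH 𝒟 ψ hcomm m (j+(2*q+t)-1) j
    rw [solC_one 𝒟 ψ hcomm hl q hq (j+(2*q+t)-1) (j+(j+(2*q+t)-1)-m-t),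
      if_neg (by omega), mul_zero, neg_zero] at h
    have hc : ((j:ℂ) - lam*((j+(2*q+t)-1:ℤ):ℂ) + 2*mu) = 1 := by
      rw [hl]; push_cast; linear_combination -2*hq - 𝒟.ht
    rw [hc, one_mul] at h
    exact h

lemma solE_ne (hcomm : ∀ x : V, ⁅ψ x, x⁆ = 0) (hlam : lam ≠ 0) (m j : ℤ) :
    𝒟.basis.repr (ψ (𝒟.M m)) (iM j) = if j = m then alpha 𝒟 ψ else 0 := by
  rcases eq_or_ne j m with rfl|hj
  · rw [if_pos rfl]
    have h0 := eqE_diag 𝒟 ψ hcomm j 0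
    have h1 := eqE_diag 𝒟 ψ hcomm j 1
    have h2 : lam * (𝒟.basis.repr (ψ (𝒟.M j)) (iM j) - alpha 𝒟 ψ) = 0 := by
      push_cast at h0 h1; linear_combination h0 - h1
    rcases mul_eq_zero.mp h2 with h'|h'
    · exact absurd h' hlam
    · linear_combination h'
  · rw [if_neg hj]
    have h0 := eqE_off 𝒟 ψ hcomm m 0 j hj
    have h1 := eqE_off 𝒟 ψ hcomm m 1 j hj
    have h2 : lam * 𝒟.basis.repr (ψ (𝒟.M m)) (iM j) = 0 := by
      push_cast at h0 h1; linear_combination h0 - h1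
    rcases mul_eq_zero.mp h2 with h'|h'
    · exact absurd h' hlam
    · exact h'

lemma solH_zeroC (hcomm : ∀ x : V, ⁅ψ x, x⁆ = 0) (hlam : lam ≠ 0)
    (hC : ∀ k j : ℤ, 𝒟.basis.repr (ψ (𝒟.E k)) (iY j) = 0) (m j : ℤ) :
    𝒟.basis.repr (ψ (𝒟.Y m)) (iM j) = 0 := by
  have h0 := eqH 𝒟 ψ hcomm m 0 j
  have h1 := eqH 𝒟 ψ hcomm m 1 j
  rw [hC, mul_zero, neg_zero] at h0 h1
  have h2 : lam * 𝒟.basis.repr (ψ (𝒟.Y m)) (iM j) = 0 := by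
    push_cast at h0 h1; linear_combination h0 - h1
  rcases mul_eq_zero.mp h2 with h'|h'
  · exact absurd h' hlam
  · exact h'

lemma neg_one_H (hcomm : ∀ x : V, ⁅ψ x, x⁆ = 0) (hl : lam = -1) (m j : ℤ) :
    𝒟.basis.repr (ψ (𝒟.Y m)) (iM j) = 0 := by
  have hCsup : ∀ k j : ℤ, ((j:ℂ) + s + mu) ≠ 0 → 𝒟.basis.repr (ψ (𝒟.E k)) (iY j) = 0 := by
    intro k j hne
    have h := eqC 𝒟 ψ hcomm k j
    rcases mul_eq_zero.mp h with h'|h'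
    · exfalso; apply hne; rw [hl] at h'; linear_combination h'
    · exact h'
  have key : ∀ k : ℤ, ((j:ℂ) + k + 2*mu) ≠ 0 → (((j+k-m-t:ℤ)):ℂ) + s + mu ≠ 0 →
      𝒟.basis.repr (ψ (𝒟.Y m)) (iM j) = 0 := by
    intro k h1 h2
    have h := eqH 𝒟 ψ hcomm m k j
    rw [hCsup k (j+k-m-t) h2, mul_zero, neg_zero] at h
    rcases mul_eq_zero.mp h with h'|h'
    · exfalso; apply h1; rw [hl] at h'; push_cast at h' ⊢; linear_combination h'
    · exact h'
  by_contra hH0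
  have disj : ∀ k : ℤ, ((j:ℂ)+k+2*mu) = 0 ∨ (((j+k-m-t:ℤ)):ℂ) + s + mu = 0 := by
    intro k
    by_contra hcon
    obtain ⟨h1, h2⟩ := not_or.mp hcon
    exact hH0 (key k h1 h2)
  have c0 := disj 0
  have c1 := disj 1
  have c2 := disj 2
  push_cast at c0 c1 c2
  rcases c0 with a0|a0 <;> rcases c1 with a1|a1 <;> rcases c2 with a2|a2 <;>
    first
    | (exfalso; have hcon : (1:ℂ) = 0 := by linear_combination a1 - a0
       exact one_ne_zero hcon)
    | (exfalso; have hcon : (1:ℂ) = 0 := by linear_combination a2 - a1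
       exact one_ne_zero hcon)
    | (exfalso; have hcon : (2:ℂ) = 0 := by linear_combination a2 - a0
       exact two_ne_zero hcon)

lemma neg_one_C (hcomm : ∀ x : V, ⁅ψ x, x⁆ = 0) (hl : lam = -1) (k j : ℤ) :
    𝒟.basis.repr (ψ (𝒟.E k)) (iY j) = 0 := by
  have h := eqH 𝒟 ψ hcomm (j-1) k (2*j-1+t-k)
  rw [neg_one_H 𝒟 ψ hcomm hl (j-1) (2*j-1+t-k), mul_zero,
    show 2*j-1+t-k+k-(j-1)-t = j from by omega] at h
  have h2 := neg_eq_zero.mp h.symm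
  rcases mul_eq_zero.mp h2 with h'|h'
  · exfalso
    have : (1:ℂ) = 0 := by push_cast at h'; linear_combination h'
    exact one_ne_zero this
  · exact h'

end DSV

namespace DSV
variable {lam mu s : ℂ} {t : ℤ} {V : Type*} [LieRing V] [LieAlgebra ℂ V] (𝒟 : DSV lam mu s t V)
variable (ψ : V →ₗ[ℂ] V)

lemma solB_zero (hcomm : ∀ x : V, ⁅ψ x, x⁆ = 0)
    (hn1 : ¬(lam = 1 ∧ ∃ r : ℤ, (r:ℂ) = 2*(mu-s)))
    (hn0 : ¬(lam = 0 ∧ ∃ r : ℤ, (r:ℂ) = 2*mu)) (k j : ℤ) :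
    𝒟.basis.repr (ψ (𝒟.E k)) (iM j) = 0 := by
  by_contra hB
  have hco : (j:ℂ) - lam*k + 2*mu = 0 := by
    rcases mul_eq_zero.mp (eqB 𝒟 ψ hcomm k j) with h'|h'
    · exact h'
    · exact absurd h' hB
  have hl1 : lam ≠ 1 := by
    intro hl; apply hn1; refine ⟨hl, ⟨k - j - t, ?_⟩⟩
    rw [hl] at hco; push_cast
    linear_combination -hco - 𝒟.ht
  have hl0 : lam ≠ 0 := by
    intro hl; apply hn0; refine ⟨hl, ⟨-j, ?_⟩⟩
    rw [hl] at hco; push_cast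
    linear_combination -hco
  have hcross := Bcross 𝒟 ψ hcomm k j (k+1) (by linear_combination hco) (by omega)
  have hsup := eqB 𝒟 ψ hcomm (k+1) (k+1+j-k)
  rw [hcross] at hsup
  have hc : ((k+1+j-k : ℤ):ℂ) - lam*((k+1 : ℤ):ℂ) + 2*mu = 1 - lam := by
    push_cast; linear_combination hco
  rw [hc] at hsup
  rcases mul_eq_zero.mp hsup with h'|h'
  · exact hl1 (by linear_combination -h')
  · rcases mul_eq_zero.mp h' with h''|h''
    · exact hl0 h''
    · exact hB h''

lemma solC_zero_iv (hcomm : ∀ x : V, ⁅ψ x, x⁆ = 0)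
    (hn1 : ¬(lam = 1 ∧ ∃ r : ℤ, (r:ℂ) = 2*(mu-s))) (k j : ℤ) :
    𝒟.basis.repr (ψ (𝒟.E k)) (iY j) = 0 := by
  by_cases hlneg : lam = -1
  · exact neg_one_C 𝒟 ψ hcomm hlneg k j
  by_contra hC
  have hco : (j:ℂ) + s - ((lam+1)/2)*k + mu = 0 := by
    rcases mul_eq_zero.mp (eqC 𝒟 ψ hcomm k j) with h'|h'
    · exact h'
    · exact absurd h' hC
  have hl1 : lam ≠ 1 := by
    intro hl; apply hn1; refine ⟨hl, ⟨2*(k - j) - 2*t, ?_⟩⟩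
    rw [hl] at hco; push_cast
    linear_combination -2*hco - 2*𝒟.ht
  have hcross := Ccross 𝒟 ψ hcomm k j (k+1) (by linear_combination hco) (by omega)
  have hsup := eqC 𝒟 ψ hcomm (k+1) (k+1+j-k)
  rw [hcross] at hsup
  have hc : ((k+1+j-k : ℤ):ℂ) + s - ((lam+1)/2)*((k+1 : ℤ):ℂ) + mu = (1-lam)/2 := by
    push_cast; linear_combination hco
  rw [hc] at hsup
  rcases mul_eq_zero.mp hsup with h'|h'
  · exact hl1 (by linear_combination -2*h')
  · rcases mul_eq_zero.mp h' with h''|h''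
    · exact hlneg (by linear_combination 2*h'')
    · exact hC h''

lemma solC_zero_i (hcomm : ∀ x : V, ⁅ψ x, x⁆ = 0) (hl : lam = 1) (r : ℤ)
    (hr : (r:ℂ) = mu - s - 1/2) (k j : ℤ) :
    𝒟.basis.repr (ψ (𝒟.E k)) (iY j) = 0 := by
  rcases mul_eq_zero.mp (eqC 𝒟 ψ hcomm k j) with h'|h'
  · exfalso
    rw [hl] at h'
    have h2 : ((2*(t+r-k+j) : ℤ):ℂ) = ((-1 : ℤ):ℂ) := by
      push_cast; linear_combination 2*h' + 2*𝒟.ht + 2*hr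
    have := intc h2
    omega
  · exact h'

lemma solH_zero_iv (hcomm : ∀ x : V, ⁅ψ x, x⁆ = 0)
    (hn1 : ¬(lam = 1 ∧ ∃ r : ℤ, (r:ℂ) = 2*(mu-s)))
    (hn0 : ¬(lam = 0 ∧ ∃ r : ℤ, (r:ℂ) = 2*mu)) (m j : ℤ) :
    𝒟.basis.repr (ψ (𝒟.Y m)) (iM j) = 0 := by
  by_cases hl0 : lam = 0
  · have h := eqH 𝒟 ψ hcomm m 0 j
    rw [solC_zero_iv 𝒟 ψ hcomm hn1, mul_zero, neg_zero] at h
    rcases mul_eq_zero.mp h with h'|h'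
    · exfalso; apply hn0; refine ⟨hl0, ⟨-j, ?_⟩⟩
      rw [hl0] at h'; push_cast
      linear_combination -h'
    · exact h'
  · exact solH_zeroC 𝒟 ψ hcomm hl0 (solC_zero_iv 𝒟 ψ hcomm hn1) m j

lemma solE_zero_iv (hcomm : ∀ x : V, ⁅ψ x, x⁆ = 0)
    (hn0 : ¬(lam = 0 ∧ ∃ r : ℤ, (r:ℂ) = 2*mu)) (m j : ℤ) :
    𝒟.basis.repr (ψ (𝒟.M m)) (iM j) = if j = m then alpha 𝒟 ψ else 0 := by
  by_cases hl0 : lam = 0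
  · rcases eq_or_ne j m with rfl|hj
    · rw [if_pos rfl]
      have h := eqE_diag 𝒟 ψ hcomm j 0
      rcases mul_eq_zero.mp h with h'|h'
      · exfalso; apply hn0; refine ⟨hl0, ⟨-j, ?_⟩⟩
        rw [hl0] at h'; push_cast
        linear_combination -h'
      · linear_combination h'
    · rw [if_neg hj]
      have h := eqE_off 𝒟 ψ hcomm m 0 j hj
      rcases mul_eq_zero.mp h with h'|h'
      · exfalso; apply hn0; refine ⟨hl0, ⟨-j, ?_⟩⟩
        rw [hl0] at h'; push_cast
        linear_combination -h'
      · exact h'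
  · exact solE_ne 𝒟 ψ hcomm hl0 m j

end DSV

namespace DSV
variable {lam mu s : ℂ} {t : ℤ} {V : Type*} [LieRing V] [LieAlgebra ℂ V]
variable (ψ : V →ₗ[ℂ] V)

lemma reprext (𝒟 : DSV lam mu s t V) {x y : V} (h : ∀ i, 𝒟.basis.repr x i = 𝒟.basis.repr y i) : x = y := by
  apply 𝒟.basis.repr.injective
  exact Finsupp.ext h

lemma psi_ext (𝒟 : DSV lam mu s t V) (g : V →ₗ[ℂ] V) (hE : ∀ n : ℤ, ψ (𝒟.E n) = g (𝒟.E n))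
    (hM : ∀ n : ℤ, ψ (𝒟.M n) = g (𝒟.M n)) (hY : ∀ n : ℤ, ψ (𝒟.Y n) = g (𝒟.Y n)) (x : V) :
    ψ x = g x := by
  have h : ψ = g := by
    apply 𝒟.basis.ext
    rintro (n | n | n)
    · rw [𝒟.basis_inl]; exact hE n
    · rw [𝒟.basis_inr_inl]; exact hM n
    · rw [𝒟.basis_inr_inr]; exact hY n
  rw [h]

lemma final_iv (𝒟 : DSV lam mu s t V) (hcomm : ∀ x : V, ⁅ψ x, x⁆ = 0)
    (hn1 : ¬(lam = 1 ∧ ∃ r : ℤ, (r:ℂ) = 2*(mu-s)))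
    (hn0 : ¬(lam = 0 ∧ ∃ r : ℤ, (r:ℂ) = 2*mu)) :
    ∃ α : ℂ, ∀ x : V, ψ x = α • x := by
  refine ⟨alpha 𝒟 ψ, ?_⟩
  have h := psi_ext ψ 𝒟 (alpha 𝒟 ψ • (LinearMap.id : V →ₗ[ℂ] V)) ?_ ?_ ?_
  · intro x; simpa using h x
  · intro n
    apply reprext 𝒟
    rintro (i | i | i) <;>
      simp only [LinearMap.smul_apply, LinearMap.id_apply, map_smul, Finsupp.smul_apply,
        𝒟.repr_E, Finsupp.single_apply, smul_eq_mul]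
    · rw [solA 𝒟 ψ hcomm n i]
      rcases eq_or_ne i n with rfl|hin
      · simp
      · simp [hin, Ne.symm hin]
    · rw [solB_zero 𝒟 ψ hcomm hn1 hn0 n i]; simp
    · rw [solC_zero_iv 𝒟 ψ hcomm hn1 n i]; simp
  · intro n
    apply reprext 𝒟
    rintro (i | i | i) <;>
      simp only [LinearMap.smul_apply, LinearMap.id_apply, map_smul, Finsupp.smul_apply,
        𝒟.repr_M, Finsupp.single_apply, smul_eq_mul]
    · rw [solD 𝒟 ψ hcomm n i]; simp
    · rw [solE_zero_iv 𝒟 ψ hcomm hn0 n i]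
      rcases eq_or_ne i n with rfl|hin
      · simp
      · simp [hin, Ne.symm hin]
    · rw [solF 𝒟 ψ hcomm n i]; simp
  · intro n
    apply reprext 𝒟
    rintro (i | i | i) <;>
      simp only [LinearMap.smul_apply, LinearMap.id_apply, map_smul, Finsupp.smul_apply,
        𝒟.repr_Y, Finsupp.single_apply, smul_eq_mul]
    · rw [solG 𝒟 ψ hcomm n i]; simp
    · rw [solH_zero_iv 𝒟 ψ hcomm hn1 hn0 n i]; simp
    · rw [solL 𝒟 ψ hcomm n i]
      rcases eq_or_ne i n with rfl|hin
      · simp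
      · simp [hin, Ne.symm hin]

lemma final_i (𝒟 : DSV lam mu s t V) (hcomm : ∀ x : V, ⁅ψ x, x⁆ = 0)
    (hl : lam = 1) (r : ℤ) (hr : (r:ℂ) = mu - s - 1/2)
    (p : ℤ) (hp : (p:ℂ) = 2*mu) (ψ₀ : V →ₗ[ℂ] V)
    (h0E : ∀ n : ℤ, ψ₀ (𝒟.E n) = 𝒟.M (n - p)) (h0M : ∀ n : ℤ, ψ₀ (𝒟.M n) = 0)
    (h0Y : ∀ n : ℤ, ψ₀ (𝒟.Y n) = 0) :
    ∃ α β : ℂ, ∀ x : V, ψ x = α • x + β • ψ₀ x := by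
  set a := alpha 𝒟 ψ with ha
  set b := 𝒟.basis.repr (ψ (𝒟.E 0)) (iM (-p)) with hb
  refine ⟨a, b, ?_⟩
  have hC := solC_zero_i 𝒟 ψ hcomm hl r hr
  have hl0 : lam ≠ 0 := by rw [hl]; exact one_ne_zero
  have h := psi_ext ψ 𝒟 (a • (LinearMap.id : V →ₗ[ℂ] V) + b • ψ₀) ?_ ?_ ?_
  · intro x; simpa using h x
  · intro n
    have hg : (a • (LinearMap.id : V →ₗ[ℂ] V) + b • ψ₀) (𝒟.E n) = a • 𝒟.E n + b • 𝒟.M (n-p) := by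
      simp [h0E n]
    rw [hg]
    apply reprext 𝒟
    rintro (i|i|i) <;>
      simp only [map_add, map_smul, Finsupp.add_apply, Finsupp.smul_apply,
        𝒟.repr_E, 𝒟.repr_M, Finsupp.single_apply, smul_eq_mul]
    · rw [solA 𝒟 ψ hcomm n i, ← ha]
      rcases eq_or_ne i n with rfl|hin
      · simp
      · simp [hin, Ne.symm hin]
    · rw [solB_one 𝒟 ψ hcomm hl p hp n i, ← hb]
      rcases eq_or_ne i (n-p) with rfl|hin
      · simp
      · simp [hin, Ne.symm hin]
    · rw [hC n i]; simp
  · intro n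
    have hg : (a • (LinearMap.id : V →ₗ[ℂ] V) + b • ψ₀) (𝒟.M n) = a • 𝒟.M n := by
      simp [h0M n]
    rw [hg]
    apply reprext 𝒟
    rintro (i|i|i) <;>
      simp only [map_smul, Finsupp.smul_apply, 𝒟.repr_M, Finsupp.single_apply, smul_eq_mul]
    · rw [solD 𝒟 ψ hcomm n i]; simp
    · rw [solE_ne 𝒟 ψ hcomm hl0 n i, ← ha]
      rcases eq_or_ne i n with rfl|hin
      · simp
      · simp [hin, Ne.symm hin]
    · rw [solF 𝒟 ψ hcomm n i]; simp
  · intro n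
    have hg : (a • (LinearMap.id : V →ₗ[ℂ] V) + b • ψ₀) (𝒟.Y n) = a • 𝒟.Y n := by
      simp [h0Y n]
    rw [hg]
    apply reprext 𝒟
    rintro (i|i|i) <;>
      simp only [map_smul, Finsupp.smul_apply, 𝒟.repr_Y, Finsupp.single_apply, smul_eq_mul]
    · rw [solG 𝒟 ψ hcomm n i]; simp
    · rw [solH_zeroC 𝒟 ψ hcomm hl0 hC n i]; simp
    · rw [solL 𝒟 ψ hcomm n i, ← ha]
      rcases eq_or_ne i n with rfl|hin
      · simp
      · simp [hin, Ne.symm hin]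

lemma final_ii (𝒟 : DSV lam mu s t V) (hcomm : ∀ x : V, ⁅ψ x, x⁆ = 0)
    (hl : lam = 1)
    (p : ℤ) (hp : (p:ℂ) = 2*mu) (q : ℤ) (hq : (q:ℂ) = mu - s) (ψ₀ : V →ₗ[ℂ] V)
    (h0E : ∀ n : ℤ, ψ₀ (𝒟.E n) = 𝒟.M (n - p)) (h0M : ∀ n : ℤ, ψ₀ (𝒟.M n) = 0)
    (h0Y : ∀ n : ℤ, ψ₀ (𝒟.Y n) = 0) (ψ₁ : V →ₗ[ℂ] V)
    (h1E : ∀ n : ℤ, ψ₁ (𝒟.E n) = 𝒟.Y (n - q - t))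
    (h1Y : ∀ n : ℤ, ψ₁ (𝒟.Y n) = 𝒟.M (n - q))
    (h1M : ∀ n : ℤ, ψ₁ (𝒟.M n) = 0) :
    ∃ α β γ : ℂ, ∀ x : V, ψ x = α • x + β • ψ₀ x + γ • ψ₁ x := by
  set a := alpha 𝒟 ψ with ha
  set b := 𝒟.basis.repr (ψ (𝒟.E 0)) (iM (-p)) with hb
  set c := 𝒟.basis.repr (ψ (𝒟.E 0)) (iY (-q-t)) with hc
  refine ⟨a, b, c, ?_⟩
  have hl0 : lam ≠ 0 := by rw [hl]; exact one_ne_zero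
  have h := psi_ext ψ 𝒟 (a • (LinearMap.id : V →ₗ[ℂ] V) + b • ψ₀ + c • ψ₁) ?_ ?_ ?_
  · intro x; simpa using h x
  · intro n
    have hg : (a • (LinearMap.id : V →ₗ[ℂ] V) + b • ψ₀ + c • ψ₁) (𝒟.E n)
        = a • 𝒟.E n + b • 𝒟.M (n-p) + c • 𝒟.Y (n-q-t) := by
      simp [h0E n, h1E n]
    rw [hg]
    apply reprext 𝒟
    rintro (i|i|i) <;>
      simp only [map_add, map_smul, Finsupp.add_apply, Finsupp.smul_apply,
        𝒟.repr_E, 𝒟.repr_M, 𝒟.repr_Y, Finsupp.single_apply, smul_eq_mul]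
    · rw [solA 𝒟 ψ hcomm n i, ← ha]
      rcases eq_or_ne i n with rfl|hin
      · simp
      · simp [hin, Ne.symm hin]
    · rw [solB_one 𝒟 ψ hcomm hl p hp n i, ← hb]
      rcases eq_or_ne i (n-p) with rfl|hin
      · simp
      · simp [hin, Ne.symm hin]
    · rw [solC_one 𝒟 ψ hcomm hl q hq n i, ← hc]
      rcases eq_or_ne i (n-q-t) with rfl|hin
      · simp
      · simp [hin, Ne.symm hin]
  · intro n
    have hg : (a • (LinearMap.id : V →ₗ[ℂ] V) + b • ψ₀ + c • ψ₁) (𝒟.M n) = a • 𝒟.M n := by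
      simp [h0M n, h1M n]
    rw [hg]
    apply reprext 𝒟
    rintro (i|i|i) <;>
      simp only [map_smul, Finsupp.smul_apply, 𝒟.repr_M, Finsupp.single_apply, smul_eq_mul]
    · rw [solD 𝒟 ψ hcomm n i]; simp
    · rw [solE_ne 𝒟 ψ hcomm hl0 n i, ← ha]
      rcases eq_or_ne i n with rfl|hin
      · simp
      · simp [hin, Ne.symm hin]
    · rw [solF 𝒟 ψ hcomm n i]; simp
  · intro n
    have hg : (a • (LinearMap.id : V →ₗ[ℂ] V) + b • ψ₀ + c • ψ₁) (𝒟.Y n)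
        = a • 𝒟.Y n + c • 𝒟.M (n-q) := by
      simp [h0Y n, h1Y n]
    rw [hg]
    apply reprext 𝒟
    rintro (i|i|i) <;>
      simp only [map_add, map_smul, Finsupp.add_apply, Finsupp.smul_apply,
        𝒟.repr_M, 𝒟.repr_Y, Finsupp.single_apply, smul_eq_mul]
    · rw [solG 𝒟 ψ hcomm n i]; simp
    · rw [solH_one 𝒟 ψ hcomm hl q hq n i, ← hc]
      rcases eq_or_ne i (n-q) with rfl|hin
      · simp
      · simp [hin, Ne.symm hin]
    · rw [solL 𝒟 ψ hcomm n i, ← ha]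
      rcases eq_or_ne i n with rfl|hin
      · simp
      · simp [hin, Ne.symm hin]

lemma final_iii (𝒟 : DSV lam mu s t V) (hcomm : ∀ x : V, ⁅ψ x, x⁆ = 0)
    (hl : lam = 0) (k : ℤ) (hk : (k:ℂ) = -2*mu) :
    ∃ (α : ℂ) (f : V →ₗ[ℂ] ℂ), ∀ x : V, ψ x = α • x + f x • 𝒟.M k := by
  set a := alpha 𝒟 ψ with ha
  have hn1 : ¬(lam = 1 ∧ ∃ r : ℤ, (r:ℂ) = 2*(mu-s)) := by
    rintro ⟨h1, -⟩; rw [hl] at h1; exact zero_ne_one h1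
  have hC := solC_zero_iv 𝒟 ψ hcomm hn1
  have hBoff : ∀ n i : ℤ, i ≠ k → 𝒟.basis.repr (ψ (𝒟.E n)) (iM i) = 0 := by
    intro n i hik
    rcases mul_eq_zero.mp (eqB 𝒟 ψ hcomm n i) with h'|h'
    · exfalso; apply hik; apply intc
      rw [hl] at h'; linear_combination h' - hk
    · exact h'
  have hHoff : ∀ n i : ℤ, i ≠ k → 𝒟.basis.repr (ψ (𝒟.Y n)) (iM i) = 0 := by
    intro n i hik
    have h := eqH 𝒟 ψ hcomm n 0 i
    rw [hC, mul_zero, neg_zero] at h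
    rcases mul_eq_zero.mp h with h'|h'
    · exfalso; apply hik; apply intc
      rw [hl] at h'; push_cast at h' ⊢; linear_combination h' - hk
    · exact h'
  have hEoff : ∀ n i : ℤ, i ≠ n → i ≠ k → 𝒟.basis.repr (ψ (𝒟.M n)) (iM i) = 0 := by
    intro n i hin hik
    rcases mul_eq_zero.mp (eqE_off 𝒟 ψ hcomm n 0 i hin) with h'|h'
    · exfalso; apply hik; apply intc
      rw [hl] at h'; push_cast at h' ⊢; linear_combination h' - hk
    · exact h'
  have hEdiag : ∀ n : ℤ, n ≠ k → 𝒟.basis.repr (ψ (𝒟.M n)) (iM n) = a := by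
    intro n hnk
    rcases mul_eq_zero.mp (eqE_diag 𝒟 ψ hcomm n 0) with h'|h'
    · exfalso; apply hnk; apply intc
      rw [hl] at h'; push_cast at h' ⊢; linear_combination h' - hk
    · rw [← ha] at h'; linear_combination h'
  set f : V →ₗ[ℂ] ℂ := 𝒟.coeff (iM k) ∘ₗ (ψ - a • (LinearMap.id : V →ₗ[ℂ] V)) with hf
  refine ⟨a, f, ?_⟩
  have hfval : ∀ x : V, f x = 𝒟.basis.repr (ψ x) (iM k) - a * 𝒟.basis.repr x (iM k) := by
    intro x
    simp [hf, coeff_apply, LinearMap.sub_apply, map_sub, Finsupp.sub_apply]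
  have h := psi_ext ψ 𝒟 (a • (LinearMap.id : V →ₗ[ℂ] V) + f.smulRight (𝒟.M k)) ?_ ?_ ?_
  · intro x
    have := h x
    simpa using this
  · intro n
    have hg : (a • (LinearMap.id : V →ₗ[ℂ] V) + f.smulRight (𝒟.M k)) (𝒟.E n)
        = a • 𝒟.E n + (𝒟.basis.repr (ψ (𝒟.E n)) (iM k)) • 𝒟.M k := by
      simp only [LinearMap.add_apply, LinearMap.smul_apply, LinearMap.id_apply,
        LinearMap.smulRight_apply, hfval]
      rw [𝒟.repr_E, Finsupp.single_apply, if_neg (by simp)]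
      ring_nf
    rw [hg]
    apply reprext 𝒟
    rintro (i|i|i) <;>
      simp only [map_add, map_smul, Finsupp.add_apply, Finsupp.smul_apply,
        𝒟.repr_E, 𝒟.repr_M, Finsupp.single_apply, smul_eq_mul]
    · rw [solA 𝒟 ψ hcomm n i, ← ha]
      rcases eq_or_ne i n with rfl|hin
      · simp
      · simp [hin, Ne.symm hin]
    · rcases eq_or_ne i k with rfl|hik
      · simp
      · rw [hBoff n i hik]; simp [hik, Ne.symm hik]
    · rw [hC n i]; simp
  · intro n
    have hg : (a • (LinearMap.id : V →ₗ[ℂ] V) + f.smulRight (𝒟.M k)) (𝒟.M n)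
        = a • 𝒟.M n + (𝒟.basis.repr (ψ (𝒟.M n)) (iM k)
            - a * (if n = k then 1 else 0)) • 𝒟.M k := by
      simp only [LinearMap.add_apply, LinearMap.smul_apply, LinearMap.id_apply,
        LinearMap.smulRight_apply, hfval]
      rw [𝒟.repr_M, Finsupp.single_apply]
      rcases eq_or_ne n k with rfl|hnk
      · simp
      · simp [hnk, Ne.symm hnk]
    rw [hg]
    apply reprext 𝒟
    rintro (i|i|i) <;>
      simp only [map_add, map_smul, Finsupp.add_apply, Finsupp.smul_apply,
        𝒟.repr_M, Finsupp.single_apply, smul_eq_mul]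
    · rw [solD 𝒟 ψ hcomm n i]; simp
    · rcases eq_or_ne i k with rfl|hik
      · rcases eq_or_ne n i with rfl|hni
        · simp
        · simp [hni, Ne.symm hni]
      · rcases eq_or_ne i n with rfl|hin
        · rw [hEdiag i (by omega)]
          simp [hik, Ne.symm hik]
        · rw [hEoff n i hin hik]
          simp [hik, Ne.symm hik, hin, Ne.symm hin]
    · rw [solF 𝒟 ψ hcomm n i]; simp
  · intro n
    have hg : (a • (LinearMap.id : V →ₗ[ℂ] V) + f.smulRight (𝒟.M k)) (𝒟.Y n)
        = a • 𝒟.Y n + (𝒟.basis.repr (ψ (𝒟.Y n)) (iM k)) • 𝒟.M k := by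
      simp only [LinearMap.add_apply, LinearMap.smul_apply, LinearMap.id_apply,
        LinearMap.smulRight_apply, hfval]
      rw [𝒟.repr_Y, Finsupp.single_apply, if_neg (by simp)]
      ring_nf
    rw [hg]
    apply reprext 𝒟
    rintro (i|i|i) <;>
      simp only [map_add, map_smul, Finsupp.add_apply, Finsupp.smul_apply,
        𝒟.repr_M, 𝒟.repr_Y, Finsupp.single_apply, smul_eq_mul]
    · rw [solG 𝒟 ψ hcomm n i]; simp
    · rcases eq_or_ne i k with rfl|hik
      · simp
      · rw [hHoff n i hik]; simp [hik, Ne.symm hik]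
    · rw [solL 𝒟 ψ hcomm n i, ← ha]
      rcases eq_or_ne i n with rfl|hin
      · simp
      · simp [hin, Ne.symm hin]

end DSV

/-- Classification of linear commuting maps `ψ` on `𝓛(λ, μ, s)`:
(i) if `λ = 1` and `μ - s - 1/2 ∈ ℤ`, then `ψ = α • id + β • ψ₀`;
(ii) if `λ = 1` and `μ - s ∈ ℤ`, then `ψ = α • id + β • ψ₀ + γ • ψ₁`;
(iii) if `λ = 0` and `2μ ∈ ℤ`, then `ψ x = α • x + f x • M_{-2μ}` for a linear
functional `f`; (iv) otherwise `ψ = α • id`.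
Here `ψ₀(L_n) = M_{n-2μ}`, `ψ₀(M_n) = ψ₀(Y_{n+s}) = 0`, and `ψ₁(L_n) = Y_{n-μ}`,
`ψ₁(Y_{n+s}) = M_{n+s-μ}`, `ψ₁(M_n) = 0`. -/
theorem linear_commuting_map_classification
    (lam mu s : ℂ) (t : ℤ) (V : Type*) [LieRing V] [LieAlgebra ℂ V]
    (𝒟 : DSV lam mu s t V) (hs : s = 0 ∨ s = 1 / 2)
    (ψ : V →ₗ[ℂ] V) (hcomm : ∀ x : V, ⁅ψ x, x⁆ = 0) :
    (lam = 1 → (∃ r : ℤ, (r : ℂ) = mu - s - 1 / 2) →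
      ∀ p : ℤ, (p : ℂ) = 2 * mu →
      ∀ ψ₀ : V →ₗ[ℂ] V,
        (∀ n : ℤ, ψ₀ (𝒟.E n) = 𝒟.M (n - p)) →
        (∀ n : ℤ, ψ₀ (𝒟.M n) = 0) →
        (∀ n : ℤ, ψ₀ (𝒟.Y n) = 0) →
      ∃ α β : ℂ, ∀ x : V, ψ x = α • x + β • ψ₀ x) ∧
    (lam = 1 → (∃ r : ℤ, (r : ℂ) = mu - s) →
      ∀ p : ℤ, (p : ℂ) = 2 * mu →
      ∀ q : ℤ, (q : ℂ) = mu - s →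
      ∀ ψ₀ : V →ₗ[ℂ] V,
        (∀ n : ℤ, ψ₀ (𝒟.E n) = 𝒟.M (n - p)) →
        (∀ n : ℤ, ψ₀ (𝒟.M n) = 0) →
        (∀ n : ℤ, ψ₀ (𝒟.Y n) = 0) →
      ∀ ψ₁ : V →ₗ[ℂ] V,
        (∀ n : ℤ, ψ₁ (𝒟.E n) = 𝒟.Y (n - q - t)) →
        (∀ n : ℤ, ψ₁ (𝒟.Y n) = 𝒟.M (n - q)) →
        (∀ n : ℤ, ψ₁ (𝒟.M n) = 0) →
      ∃ α β γ : ℂ, ∀ x : V, ψ x = α • x + β • ψ₀ x + γ • ψ₁ x) ∧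
    (lam = 0 → ∀ k : ℤ, (k : ℂ) = -2 * mu →
      ∃ (α : ℂ) (f : V →ₗ[ℂ] ℂ), ∀ x : V, ψ x = α • x + f x • 𝒟.M k) ∧
    (¬ (lam = 1 ∧ ∃ r : ℤ, (r : ℂ) = 2 * (mu - s)) →
     ¬ (lam = 0 ∧ ∃ r : ℤ, (r : ℂ) = 2 * mu) →
      ∃ α : ℂ, ∀ x : V, ψ x = α • x) := by
  refine ⟨?_, ?_, ?_, ?_⟩
  · rintro hl ⟨r, hr⟩ p hp ψ₀ h0E h0M h0Y
    exact DSV.final_i ψ 𝒟 hcomm hl r hr p hp ψ₀ h0E h0M h0Y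
  · rintro hl ⟨r, hr⟩ p hp q hq ψ₀ h0E h0M h0Y ψ₁ h1E h1Y h1M
    exact DSV.final_ii ψ 𝒟 hcomm hl p hp q hq ψ₀ h0E h0M h0Y ψ₁ h1E h1Y h1M
  · intro hl k hk
    exact DSV.final_iii ψ 𝒟 hcomm hl k hk
  · intro hn1 hn0
    exact DSV.final_iv ψ 𝒟 hcomm hn1 hn0
end
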